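/- arXiv:2203.07335 — 6 statements merged into one kernel-verified Lean document; each statement's English description precedes it below -/
import Mathlib

section
/- For every integer p ≥ 2, the vertex metric dimension of the Θ-graph Θ_{p,p,p} is at least 3; that is, no set of two vertices of Θ_{p,p,p} is a vertex metric generator. -/
/-- Vertices of the Θ-graph `Θ_{p,q,r}`: the two branching vertices `u` and `v`,
together with the internal vertices of the three `u`–`v` paths of lengths `p`, `q`, `r`.
`a i` is the internal vertex `u_{i+1}` of the first path, `b i` is `v_{i+1}` of the
second path, and `c i` is `w_{i+1}` of the third path. -/
inductive ThetaVert (p q r : ℕ) : Type where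
  | u : ThetaVert p q r
  | v : ThetaVert p q r
  | a : Fin (p - 1) → ThetaVert p q r
  | b : Fin (q - 1) → ThetaVert p q r
  | c : Fin (r - 1) → ThetaVert p q r
  deriving DecidableEq

/-- Base adjacency relation for the Θ-graph (one direction of each edge). -/
def thetaRel (p q r : ℕ) : ThetaVert p q r → ThetaVert p q r → Prop
  | .u, .v => p = 1 ∨ q = 1 ∨ r = 1
  | .u, .a i => (i : ℕ) = 0
  | .u, .b i => (i : ℕ) = 0
  | .u, .c i => (i : ℕ) = 0
  | .a i, .v => (i : ℕ) = p - 2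
  | .b i, .v => (i : ℕ) = q - 2
  | .c i, .v => (i : ℕ) = r - 2
  | .a i, .a j => (j : ℕ) = (i : ℕ) + 1
  | .b i, .b j => (j : ℕ) = (i : ℕ) + 1
  | .c i, .c j => (j : ℕ) = (i : ℕ) + 1
  | _, _ => False

/-- The Θ-graph `Θ_{p,q,r}`. -/
def thetaGraph (p q r : ℕ) : SimpleGraph (ThetaVert p q r) :=
  SimpleGraph.fromRel (thetaRel p q r)

/-- The vertex `u_i` (for `0 ≤ i ≤ p`) on the first path of `Θ_{p,q,r}`. -/
def uV (p q r : ℕ) (i : ℕ) : ThetaVert p q r :=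
  if h : 0 < i ∧ i < p then ThetaVert.a ⟨i - 1, by omega⟩
  else if i = 0 then ThetaVert.u else ThetaVert.v

/-- The vertex `v_i` (for `0 ≤ i ≤ q`) on the second path of `Θ_{p,q,r}`. -/
def vV (p q r : ℕ) (i : ℕ) : ThetaVert p q r :=
  if h : 0 < i ∧ i < q then ThetaVert.b ⟨i - 1, by omega⟩
  else if i = 0 then ThetaVert.u else ThetaVert.v

/-- The vertex `w_i` (for `0 ≤ i ≤ r`) on the third path of `Θ_{p,q,r}`. -/
def wV (p q r : ℕ) (i : ℕ) : ThetaVert p q r :=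
  if h : 0 < i ∧ i < r then ThetaVert.c ⟨i - 1, by omega⟩
  else if i = 0 then ThetaVert.u else ThetaVert.v

/-- `S` is a vertex metric generator of `G`: every pair of distinct vertices is
distinguished by some vertex of `S`. -/
def IsVertexMetricGenerator {V : Type*} (G : SimpleGraph V) (S : Set V) : Prop :=
  ∀ x x' : V, x ≠ x' → ∃ s ∈ S, G.dist s x ≠ G.dist s x'

/-- The vertex metric dimension of `G`: the least cardinality of a vertex metric generator. -/
noncomputable def vertexMetricDim {V : Type*} (G : SimpleGraph V) : ℕ :=
  sInf {n : ℕ | ∃ S : Finset V, S.card = n ∧ IsVertexMetricGenerator G ↑S}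

/-- Distance from a vertex `x` to an edge `e`: the minimum of the distances to its endpoints. -/
noncomputable def edgeDist {V : Type*} (G : SimpleGraph V) (x : V) (e : Sym2 V) : ℕ :=
  Sym2.lift ⟨fun y z => min (G.dist x y) (G.dist x z), fun _ _ => min_comm _ _⟩ e

/-- `S` is an edge metric generator of `G`: every pair of distinct edges is
distinguished by some vertex of `S`. -/
def IsEdgeMetricGenerator {V : Type*} (G : SimpleGraph V) (S : Set V) : Prop :=
  ∀ e ∈ G.edgeSet, ∀ f ∈ G.edgeSet, e ≠ f → ∃ s ∈ S, edgeDist G s e ≠ edgeDist G s f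

/-- The edge metric dimension of `G`: the least cardinality of an edge metric generator. -/
noncomputable def edgeMetricDim {V : Type*} (G : SimpleGraph V) : ℕ :=
  sInf {n : ℕ | ∃ S : Finset V, S.card = n ∧ IsEdgeMetricGenerator G ↑S}


deriving instance Fintype for ThetaVert

namespace ThetaAux
open SimpleGraph

variable {p : ℕ}

lemma theta_adj {p q r : ℕ} {x y : ThetaVert p q r} :
    (thetaGraph p q r).Adj x y ↔ x ≠ y ∧ (thetaRel p q r x y ∨ thetaRel p q r y x) := by
  simp [thetaGraph, SimpleGraph.fromRel_adj]

/-- distance formula from position `i` on path A -/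
def Fv (p i : ℕ) : ThetaVert p p p → ℕ
  | .u => i
  | .v => p - i
  | .a m => (i - ((m : ℕ) + 1)) + (((m : ℕ) + 1) - i)
  | .b m => min (i + ((m : ℕ) + 1)) (2 * p - (i + ((m : ℕ) + 1)))
  | .c m => min (i + ((m : ℕ) + 1)) (2 * p - (i + ((m : ℕ) + 1)))

lemma Fv_lip (hp : 2 ≤ p) {i : ℕ} (hi : i ≤ p) {x y : ThetaVert p p p}
    (h : (thetaGraph p p p).Adj x y) : Fv p i y ≤ Fv p i x + 1 := by
  rw [theta_adj] at h
  obtain ⟨-, h⟩ := h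
  cases x <;> cases y <;> simp [thetaRel, Fv] at h ⊢ <;> omega

/-- swap branches A and B -/
def sABf : ThetaVert p p p → ThetaVert p p p
  | .u => .u | .v => .v | .a i => .b i | .b i => .a i | .c i => .c i

/-- swap branches B and C -/
def sBCf : ThetaVert p p p → ThetaVert p p p
  | .u => .u | .v => .v | .a i => .a i | .b i => .c i | .c i => .b i

/-- swap branches A and C -/
def sACf : ThetaVert p p p → ThetaVert p p p
  | .u => .u | .v => .v | .a i => .c i | .b i => .b i | .c i => .a i

def sAB (p : ℕ) : thetaGraph p p p ≃g thetaGraph p p p where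
  toFun := sABf
  invFun := sABf
  left_inv x := by cases x <;> rfl
  right_inv x := by cases x <;> rfl
  map_rel_iff' := by
    intro x y
    cases x <;> cases y <;> simp [sABf, theta_adj, thetaRel]

def sBC (p : ℕ) : thetaGraph p p p ≃g thetaGraph p p p where
  toFun := sBCf
  invFun := sBCf
  left_inv x := by cases x <;> rfl
  right_inv x := by cases x <;> rfl
  map_rel_iff' := by
    intro x y
    cases x <;> cases y <;> simp [sBCf, theta_adj, thetaRel]

def sAC (p : ℕ) : thetaGraph p p p ≃g thetaGraph p p p where
  toFun := sACf
  invFun := sACf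
  left_inv x := by cases x <;> rfl
  right_inv x := by cases x <;> rfl
  map_rel_iff' := by
    intro x y
    cases x <;> cases y <;> simp [sACf, theta_adj, thetaRel]
lemma uV_zero : uV p p p 0 = ThetaVert.u := by simp [uV]

lemma uV_last (hp : 2 ≤ p) : uV p p p p = ThetaVert.v := by
  unfold uV
  rw [dif_neg (by omega), if_neg (by omega)]

lemma vV_zero : vV p p p 0 = ThetaVert.u := by simp [vV]

lemma vV_last (hp : 2 ≤ p) : vV p p p p = ThetaVert.v := by
  unfold vV
  rw [dif_neg (by omega), if_neg (by omega)]

lemma wV_zero : wV p p p 0 = ThetaVert.u := by simp [wV]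

lemma wV_last (hp : 2 ≤ p) : wV p p p p = ThetaVert.v := by
  unfold wV
  rw [dif_neg (by omega), if_neg (by omega)]

lemma uV_a (hp : 2 ≤ p) (m : Fin (p - 1)) : uV p p p ((m : ℕ) + 1) = ThetaVert.a m := by
  have := m.isLt
  unfold uV
  rw [dif_pos (by omega)]
  congr 1

lemma vV_b (hp : 2 ≤ p) (m : Fin (p - 1)) : vV p p p ((m : ℕ) + 1) = ThetaVert.b m := by
  have := m.isLt
  unfold vV
  rw [dif_pos (by omega)]
  congr 1

lemma wV_c (hp : 2 ≤ p) (m : Fin (p - 1)) : wV p p p ((m : ℕ) + 1) = ThetaVert.c m := by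
  have := m.isLt
  unfold wV
  rw [dif_pos (by omega)]
  congr 1

lemma adj_uV (hp : 2 ≤ p) {k : ℕ} (hk : k < p) :
    (thetaGraph p p p).Adj (uV p p p k) (uV p p p (k + 1)) := by
  rw [theta_adj]
  unfold uV
  split_ifs <;>
    first
      | contradiction
      | (exfalso; omega)
      | (refine ⟨?_, Or.inl ?_⟩ <;> simp [thetaRel] <;> omega)

lemma adj_vV (hp : 2 ≤ p) {k : ℕ} (hk : k < p) :
    (thetaGraph p p p).Adj (vV p p p k) (vV p p p (k + 1)) := by
  rw [theta_adj]
  unfold vV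
  split_ifs <;>
    first
      | contradiction
      | (exfalso; omega)
      | (refine ⟨?_, Or.inl ?_⟩ <;> simp [thetaRel] <;> omega)

lemma adj_wV (hp : 2 ≤ p) {k : ℕ} (hk : k < p) :
    (thetaGraph p p p).Adj (wV p p p k) (wV p p p (k + 1)) := by
  rw [theta_adj]
  unfold wV
  split_ifs <;>
    first
      | contradiction
      | (exfalso; omega)
      | (refine ⟨?_, Or.inl ?_⟩ <;> simp [thetaRel] <;> omega)

lemma reach_uV (hp : 2 ≤ p) {k : ℕ} (hk : k ≤ p) :
    (thetaGraph p p p).Reachable ThetaVert.u (uV p p p k) := by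
  induction k with
  | zero => rw [uV_zero]
  | succ k ih => exact (ih (by omega)).trans (adj_uV hp (by omega)).reachable

lemma reach_vV (hp : 2 ≤ p) {k : ℕ} (hk : k ≤ p) :
    (thetaGraph p p p).Reachable ThetaVert.u (vV p p p k) := by
  induction k with
  | zero => rw [vV_zero]
  | succ k ih => exact (ih (by omega)).trans (adj_vV hp (by omega)).reachable

lemma reach_wV (hp : 2 ≤ p) {k : ℕ} (hk : k ≤ p) :
    (thetaGraph p p p).Reachable ThetaVert.u (wV p p p k) := by
  induction k with
  | zero => rw [wV_zero]
  | succ k ih => exact (ih (by omega)).trans (adj_wV hp (by omega)).reachable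

lemma reach_all (hp : 2 ≤ p) (x : ThetaVert p p p) :
    (thetaGraph p p p).Reachable ThetaVert.u x := by
  cases x with
  | u => rfl
  | v => rw [← uV_last hp]; exact reach_uV hp le_rfl
  | a m => rw [← uV_a hp m]; exact reach_uV hp (by have := m.isLt; omega)
  | b m => rw [← vV_b hp m]; exact reach_vV hp (by have := m.isLt; omega)
  | c m => rw [← wV_c hp m]; exact reach_wV hp (by have := m.isLt; omega)

lemma theta_conn (hp : 2 ≤ p) : (thetaGraph p p p).Connected := by
  rw [SimpleGraph.connected_iff]
  exact ⟨fun x y => ((reach_all hp x).symm.trans (reach_all hp y)), ⟨ThetaVert.u⟩⟩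
lemma iso_dist {V : Type*} {G : SimpleGraph V} (φ : G ≃g G) (hc : G.Connected) (x y : V) :
    G.dist (φ x) (φ y) = G.dist x y := by
  have key : ∀ (ψ : G ≃g G) (x y : V), G.dist (ψ x) (ψ y) ≤ G.dist x y := by
    intro ψ x y
    obtain ⟨w, hw⟩ := hc.exists_walk_length_eq_dist x y
    calc G.dist (ψ x) (ψ y) ≤ (w.map ψ.toHom).length := SimpleGraph.dist_le _
    _ = w.length := SimpleGraph.Walk.length_map _ _
    _ = G.dist x y := hw
  refine le_antisymm (key φ x y) ?_
  have := key φ.symm (φ x) (φ y)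
  simpa using this

lemma Fv_le_of_walk (hp : 2 ≤ p) {i : ℕ} (hi : i ≤ p) {x y : ThetaVert p p p}
    (w : (thetaGraph p p p).Walk x y) : Fv p i y ≤ Fv p i x + w.length := by
  induction w with
  | nil => simp
  | cons h w ih =>
      have := Fv_lip hp hi h
      simp only [SimpleGraph.Walk.length_cons]
      omega

lemma Fv_uV {i k : ℕ} (hi : i ≤ p) (hk : k ≤ p) :
    Fv p i (uV p p p k) = (i - k) + (k - i) := by
  unfold uV
  split_ifs <;> simp [Fv] <;> omega

lemma Fv_vV {i k : ℕ} (hi : i ≤ p) (hk : k ≤ p) :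
    Fv p i (vV p p p k) = min (i + k) (2 * p - (i + k)) := by
  unfold vV
  split_ifs <;> simp [Fv] <;> omega

lemma Fv_wV {i k : ℕ} (hi : i ≤ p) (hk : k ≤ p) :
    Fv p i (wV p p p k) = min (i + k) (2 * p - (i + k)) := by
  unfold wV
  split_ifs <;> simp [Fv] <;> omega

lemma dist_uV_chain (hp : 2 ≤ p) {k l : ℕ} (hkl : k ≤ l) (hl : l ≤ p) :
    (thetaGraph p p p).dist (uV p p p k) (uV p p p l) ≤ l - k := by
  induction l, hkl using Nat.le_induction with
  | base => simp
  | succ l hkl ih =>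
      have h1 := ih (by omega)
      have h2 : (thetaGraph p p p).dist (uV p p p l) (uV p p p (l + 1)) = 1 :=
        SimpleGraph.dist_eq_one_iff_adj.mpr (adj_uV hp (by omega))
      have h3 := (theta_conn hp).dist_triangle (u := uV p p p k) (v := uV p p p l)
        (w := uV p p p (l + 1))
      omega

lemma dist_vV_chain (hp : 2 ≤ p) {k l : ℕ} (hkl : k ≤ l) (hl : l ≤ p) :
    (thetaGraph p p p).dist (vV p p p k) (vV p p p l) ≤ l - k := by
  induction l, hkl using Nat.le_induction with
  | base => simp
  | succ l hkl ih =>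
      have h1 := ih (by omega)
      have h2 : (thetaGraph p p p).dist (vV p p p l) (vV p p p (l + 1)) = 1 :=
        SimpleGraph.dist_eq_one_iff_adj.mpr (adj_vV hp (by omega))
      have h3 := (theta_conn hp).dist_triangle (u := vV p p p k) (v := vV p p p l)
        (w := vV p p p (l + 1))
      omega

lemma dist_wV_chain (hp : 2 ≤ p) {k l : ℕ} (hkl : k ≤ l) (hl : l ≤ p) :
    (thetaGraph p p p).dist (wV p p p k) (wV p p p l) ≤ l - k := by
  induction l, hkl using Nat.le_induction with
  | base => simp
  | succ l hkl ih =>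
      have h1 := ih (by omega)
      have h2 : (thetaGraph p p p).dist (wV p p p l) (wV p p p (l + 1)) = 1 :=
        SimpleGraph.dist_eq_one_iff_adj.mpr (adj_wV hp (by omega))
      have h3 := (theta_conn hp).dist_triangle (u := wV p p p k) (v := wV p p p l)
        (w := wV p p p (l + 1))
      omega
lemma dist_eq_Fv (hp : 2 ≤ p) {i : ℕ} (hi : i ≤ p) (x : ThetaVert p p p) :
    (thetaGraph p p p).dist (uV p p p i) x = Fv p i x := by
  have hc := theta_conn hp
  have hlow : Fv p i x ≤ (thetaGraph p p p).dist (uV p p p i) x := by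
    obtain ⟨w, hw⟩ := hc.exists_walk_length_eq_dist (uV p p p i) x
    have h1 := Fv_le_of_walk hp hi w
    have h0 : Fv p i (uV p p p i) = 0 := by rw [Fv_uV hi hi]; omega
    omega
  have t0 : (thetaGraph p p p).dist (uV p p p i) ThetaVert.u ≤ i := by
    have h := dist_uV_chain hp (Nat.zero_le i) hi
    rw [uV_zero, SimpleGraph.dist_comm] at h
    simpa using h
  have t3 : (thetaGraph p p p).dist (uV p p p i) ThetaVert.v ≤ p - i := by
    have h := dist_uV_chain hp hi le_rfl
    rwa [uV_last hp] at h
  have hup : (thetaGraph p p p).dist (uV p p p i) x ≤ Fv p i x := by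
    cases x with
    | u => simpa [Fv] using t0
    | v => simpa [Fv] using t3
    | a m =>
        have hm := m.isLt
        rcases le_total i ((m : ℕ) + 1) with h | h
        · have h2 := dist_uV_chain hp h (by omega)
          rw [uV_a hp] at h2
          simp only [Fv]; omega
        · have h2 := dist_uV_chain hp h hi
          rw [uV_a hp, SimpleGraph.dist_comm] at h2
          simp only [Fv]; omega
    | b m =>
        have hm := m.isLt
        have t2 : (thetaGraph p p p).dist ThetaVert.u (vV p p p ((m : ℕ) + 1)) ≤ (m : ℕ) + 1 := by
          have h := dist_vV_chain hp (Nat.zero_le ((m : ℕ) + 1)) (by omega)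
          rw [vV_zero] at h
          simpa using h
        have t4 : (thetaGraph p p p).dist ThetaVert.v (vV p p p ((m : ℕ) + 1)) ≤ p - ((m : ℕ) + 1) := by
          have h := dist_vV_chain hp (show (m : ℕ) + 1 ≤ p by omega) le_rfl
          rw [vV_last hp, SimpleGraph.dist_comm] at h
          exact h
        have tri1 := hc.dist_triangle (u := uV p p p i) (v := ThetaVert.u)
          (w := vV p p p ((m : ℕ) + 1))
        have tri2 := hc.dist_triangle (u := uV p p p i) (v := ThetaVert.v)
          (w := vV p p p ((m : ℕ) + 1))
        rw [← vV_b hp m, Fv_vV hi (by omega)]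
        omega
    | c m =>
        have hm := m.isLt
        have t2 : (thetaGraph p p p).dist ThetaVert.u (wV p p p ((m : ℕ) + 1)) ≤ (m : ℕ) + 1 := by
          have h := dist_wV_chain hp (Nat.zero_le ((m : ℕ) + 1)) (by omega)
          rw [wV_zero] at h
          simpa using h
        have t4 : (thetaGraph p p p).dist ThetaVert.v (wV p p p ((m : ℕ) + 1)) ≤ p - ((m : ℕ) + 1) := by
          have h := dist_wV_chain hp (show (m : ℕ) + 1 ≤ p by omega) le_rfl
          rw [wV_last hp, SimpleGraph.dist_comm] at h
          exact h
        have tri1 := hc.dist_triangle (u := uV p p p i) (v := ThetaVert.u)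
          (w := wV p p p ((m : ℕ) + 1))
        have tri2 := hc.dist_triangle (u := uV p p p i) (v := ThetaVert.v)
          (w := wV p p p ((m : ℕ) + 1))
        rw [← wV_c hp m, Fv_wV hi (by omega)]
        omega
  exact le_antisymm hup hlow

lemma sAB_uV (k : ℕ) : sAB p (uV p p p k) = vV p p p k := by
  unfold uV vV
  split_ifs <;> rfl

lemma sAB_vV (k : ℕ) : sAB p (vV p p p k) = uV p p p k := by
  unfold uV vV
  split_ifs <;> rfl

lemma sAB_wV (k : ℕ) : sAB p (wV p p p k) = wV p p p k := by
  unfold wV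
  split_ifs <;> rfl

lemma dist_eq_Fv' (hp : 2 ≤ p) {j : ℕ} (hj : j ≤ p) (x : ThetaVert p p p) :
    (thetaGraph p p p).dist (vV p p p j) x = Fv p j (sAB p x) := by
  have h := iso_dist (sAB p) (theta_conn hp) (vV p p p j) x
  rw [sAB_vV] at h
  rw [← h, dist_eq_Fv hp hj]
lemma uV_ne_uV {k l : ℕ} (hk : k ≤ p) (hl : l ≤ p) (h : k ≠ l) :
    uV p p p k ≠ uV p p p l := by
  unfold uV
  split_ifs <;> simp <;> omega

lemma uV_ne_wV {k l : ℕ} (hk : k ≤ p) (hl1 : 0 < l) (hl2 : l < p) :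
    uV p p p k ≠ wV p p p l := by
  unfold uV wV
  split_ifs <;> simp <;> omega

lemma vV_ne_wV {k l : ℕ} (hk : k ≤ p) (hl1 : 0 < l) (hl2 : l < p) :
    vV p p p k ≠ wV p p p l := by
  unfold vV wV
  split_ifs <;> simp <;> omega

/-- two vertices `s`, `t` do not distinguish some pair of vertices -/
def Pear (p : ℕ) (s t : ThetaVert p p p) : Prop :=
  ∃ x x', x ≠ x' ∧ (thetaGraph p p p).dist s x = (thetaGraph p p p).dist s x' ∧
    (thetaGraph p p p).dist t x = (thetaGraph p p p).dist t x'

lemma Pear.symm {s t : ThetaVert p p p} (h : Pear p s t) : Pear p t s := by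
  obtain ⟨x, x', h1, h2, h3⟩ := h
  exact ⟨x, x', h1, h3, h2⟩

lemma pear_of_fix (hp : 2 ≤ p) (φ : thetaGraph p p p ≃g thetaGraph p p p)
    {s t x : ThetaVert p p p} (hs : φ s = s) (ht : φ t = t) (hx : φ x ≠ x) :
    Pear p s t := by
  have hc := theta_conn hp
  refine ⟨x, φ x, fun h => hx h.symm, ?_, ?_⟩
  · rw [← iso_dist φ hc s x, hs]
  · rw [← iso_dist φ hc t x, ht]

lemma pear_transfer (hp : 2 ≤ p) (φ : thetaGraph p p p ≃g thetaGraph p p p)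
    {s t : ThetaVert p p p} (h : Pear p (φ s) (φ t)) : Pear p s t := by
  have hc := theta_conn hp
  obtain ⟨x, x', h1, h2, h3⟩ := h
  refine ⟨φ.symm x, φ.symm x', fun h => h1 (by simpa using congrArg φ h), ?_, ?_⟩
  · rw [← iso_dist φ hc s (φ.symm x), ← iso_dist φ hc s (φ.symm x')]
    simpa using h2
  · rw [← iso_dist φ hc t (φ.symm x), ← iso_dist φ hc t (φ.symm x')]
    simpa using h3

lemma corePear (hp : 2 ≤ p) (i0 j0 : Fin (p - 1)) :
    Pear p (ThetaVert.a i0) (ThetaVert.b j0) := by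
  have hi0 := i0.isLt
  have hj0 := j0.isLt
  set i : ℕ := (i0 : ℕ) + 1 with hidef
  set j : ℕ := (j0 : ℕ) + 1 with hjdef
  have hi : 1 ≤ i ∧ i ≤ p - 1 := by omega
  have hj : 1 ≤ j ∧ j ≤ p - 1 := by omega
  have ha : ThetaVert.a i0 = uV p p p i := (uV_a hp i0).symm
  have hb : ThetaVert.b j0 = vV p p p j := (vV_b hp j0).symm
  have key1 : ∀ x, (thetaGraph p p p).dist (ThetaVert.a i0) x = Fv p i x := by
    intro x; rw [ha, dist_eq_Fv hp (by omega)]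
  have key2 : ∀ x, (thetaGraph p p p).dist (ThetaVert.b j0) x = Fv p j (sAB p x) := by
    intro x; rw [hb, dist_eq_Fv' hp (by omega)]
  rcases Nat.lt_trichotomy (i + j) p with hs | hs | hs
  · rcases Nat.lt_trichotomy i j with hij | hij | hij
    · -- i < j, i + j < p : pair (uV (p+i-j), wV (p-i-j))
      refine ⟨uV p p p (p + i - j), wV p p p (p - i - j), uV_ne_wV (by omega) (by omega) (by omega), ?_, ?_⟩
      · rw [key1, key1, Fv_uV (by omega) (by omega), Fv_wV (by omega) (by omega)]
        omega
      · rw [key2, key2, sAB_uV, sAB_wV, Fv_vV (by omega) (by omega), Fv_wV (by omega) (by omega)]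
        omega
    · -- i = j < p/2 : pair (uV p, wV (p-2i))
      refine ⟨uV p p p p, wV p p p (p - 2 * i), uV_ne_wV (by omega) (by omega) (by omega), ?_, ?_⟩
      · rw [key1, key1, Fv_uV (by omega) (by omega), Fv_wV (by omega) (by omega)]
        omega
      · rw [key2, key2, sAB_uV, sAB_wV, Fv_vV (by omega) (by omega), Fv_wV (by omega) (by omega)]
        omega
    · -- j < i, i + j < p : pair (vV (p+j-i), wV (p-i-j))
      refine ⟨vV p p p (p + j - i), wV p p p (p - i - j), vV_ne_wV (by omega) (by omega) (by omega), ?_, ?_⟩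
      · rw [key1, key1, Fv_vV (by omega) (by omega), Fv_wV (by omega) (by omega)]
        omega
      · rw [key2, key2, sAB_vV, sAB_wV, Fv_uV (by omega) (by omega), Fv_wV (by omega) (by omega)]
        omega
  · -- i + j = p : pair (uV (i-1), uV (i+1))
    refine ⟨uV p p p (i - 1), uV p p p (i + 1), uV_ne_uV (by omega) (by omega) (by omega), ?_, ?_⟩
    · rw [key1, key1, Fv_uV (by omega) (by omega), Fv_uV (by omega) (by omega)]
      omega
    · rw [key2, key2, sAB_uV, sAB_uV, Fv_vV (by omega) (by omega), Fv_vV (by omega) (by omega)]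
      omega
  · rcases Nat.lt_trichotomy i j with hij | hij | hij
    · -- i < j, i + j > p : pair (vV (j-i), wV (2p-i-j))
      refine ⟨vV p p p (j - i), wV p p p (2 * p - i - j), vV_ne_wV (by omega) (by omega) (by omega), ?_, ?_⟩
      · rw [key1, key1, Fv_vV (by omega) (by omega), Fv_wV (by omega) (by omega)]
        omega
      · rw [key2, key2, sAB_vV, sAB_wV, Fv_uV (by omega) (by omega), Fv_wV (by omega) (by omega)]
        omega
    · -- i = j > p/2 : pair (uV 0, wV (2p-2i))
      refine ⟨uV p p p 0, wV p p p (2 * p - 2 * i), uV_ne_wV (by omega) (by omega) (by omega), ?_, ?_⟩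
      · rw [key1, key1, Fv_uV (by omega) (by omega), Fv_wV (by omega) (by omega)]
        omega
      · rw [key2, key2, sAB_uV, sAB_wV, Fv_vV (by omega) (by omega), Fv_wV (by omega) (by omega)]
        omega
    · -- j < i, i + j > p : pair (uV (i-j), wV (2p-i-j))
      refine ⟨uV p p p (i - j), wV p p p (2 * p - i - j), uV_ne_wV (by omega) (by omega) (by omega), ?_, ?_⟩
      · rw [key1, key1, Fv_uV (by omega) (by omega), Fv_wV (by omega) (by omega)]
        omega
      · rw [key2, key2, sAB_uV, sAB_wV, Fv_vV (by omega) (by omega), Fv_wV (by omega) (by omega)]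
        omega
lemma allPear (hp : 2 ≤ p) (s t : ThetaVert p p p) : Pear p s t := by
  have h1 : (0 : ℕ) < p - 1 := by omega
  have hbc : sBC p (ThetaVert.b ⟨0, h1⟩) ≠ ThetaVert.b ⟨0, h1⟩ := by
    show ThetaVert.c _ ≠ ThetaVert.b _
    simp
  have hac : sAC p (ThetaVert.a ⟨0, h1⟩) ≠ ThetaVert.a ⟨0, h1⟩ := by
    show ThetaVert.c _ ≠ ThetaVert.a _
    simp
  have hab : sAB p (ThetaVert.a ⟨0, h1⟩) ≠ ThetaVert.a ⟨0, h1⟩ := by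
    show ThetaVert.b _ ≠ ThetaVert.a _
    simp
  cases s with
  | u =>
    cases t with
    | u => exact pear_of_fix hp (sBC p) rfl rfl hbc
    | v => exact pear_of_fix hp (sBC p) rfl rfl hbc
    | a i => exact pear_of_fix hp (sBC p) rfl rfl hbc
    | b i => exact pear_of_fix hp (sAC p) rfl rfl hac
    | c i => exact pear_of_fix hp (sAB p) rfl rfl hab
  | v =>
    cases t with
    | u => exact pear_of_fix hp (sBC p) rfl rfl hbc
    | v => exact pear_of_fix hp (sBC p) rfl rfl hbc
    | a i => exact pear_of_fix hp (sBC p) rfl rfl hbc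
    | b i => exact pear_of_fix hp (sAC p) rfl rfl hac
    | c i => exact pear_of_fix hp (sAB p) rfl rfl hab
  | a i =>
    cases t with
    | u => exact pear_of_fix hp (sBC p) rfl rfl hbc
    | v => exact pear_of_fix hp (sBC p) rfl rfl hbc
    | a j => exact pear_of_fix hp (sBC p) rfl rfl hbc
    | b j => exact corePear hp i j
    | c j =>
      exact pear_transfer hp (sBC p) (s := ThetaVert.a i) (t := ThetaVert.c j)
        (corePear hp i j)
  | b i =>
    cases t with
    | u => exact pear_of_fix hp (sAC p) rfl rfl hac
    | v => exact pear_of_fix hp (sAC p) rfl rfl hac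
    | a j => exact (corePear hp j i).symm
    | b j => exact pear_of_fix hp (sAC p) rfl rfl hac
    | c j =>
      exact pear_transfer hp (sAB p) (s := ThetaVert.b i) (t := ThetaVert.c j)
        (pear_transfer hp (sBC p) (s := ThetaVert.a i) (t := ThetaVert.c j) (corePear hp i j))
  | c i =>
    cases t with
    | u => exact pear_of_fix hp (sAB p) rfl rfl hab
    | v => exact pear_of_fix hp (sAB p) rfl rfl hab
    | a j =>
      exact (pear_transfer hp (sBC p) (s := ThetaVert.a j) (t := ThetaVert.c i)
        (corePear hp j i)).symm
    | b j =>
      exact (pear_transfer hp (sAB p) (s := ThetaVert.b j) (t := ThetaVert.c i)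
        (pear_transfer hp (sBC p) (s := ThetaVert.a j) (t := ThetaVert.c i)
          (corePear hp j i))).symm
    | c j => exact pear_of_fix hp (sAB p) rfl rfl hab

lemma univ_gen (hp : 2 ≤ p) :
    IsVertexMetricGenerator (thetaGraph p p p)
      (↑(Finset.univ : Finset (ThetaVert p p p))) := by
  intro x x' hne
  refine ⟨x, by simp, ?_⟩
  rw [SimpleGraph.dist_self]
  exact ((theta_conn hp).pos_dist_of_ne hne).ne

end ThetaAux


/-- For every integer `p ≥ 2`, the vertex metric dimension of
`Θ_{p,p,p}` is at least 3. -/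
theorem vertexMetricDim_theta_ppp_ge_three (p : ℕ) (hp : 2 ≤ p) :
    3 ≤ vertexMetricDim (thetaGraph p p p) := by
  unfold vertexMetricDim
  set T : Set ℕ := {n : ℕ | ∃ S : Finset (ThetaVert p p p), S.card = n ∧
    IsVertexMetricGenerator (thetaGraph p p p) ↑S} with hT
  have hne : T.Nonempty :=
    ⟨(Finset.univ : Finset (ThetaVert p p p)).card, Finset.univ, rfl, ThetaAux.univ_gen hp⟩
  obtain ⟨S, hS, hgen⟩ := Nat.sInf_mem hne
  by_contra hlt
  push_neg at hlt
  have hcard : S.card ≤ 2 := by omega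
  have hmem : ∃ s1 s2 : ThetaVert p p p, ∀ s ∈ S, s = s1 ∨ s = s2 := by
    have h3 : S.card = 0 ∨ S.card = 1 ∨ S.card = 2 := by omega
    rcases h3 with h0 | h1 | h2
    · exact ⟨ThetaVert.u, ThetaVert.u, by simp [Finset.card_eq_zero.mp h0]⟩
    · obtain ⟨a, ha⟩ := Finset.card_eq_one.mp h1
      exact ⟨a, a, by intro s hs; rw [ha] at hs; simpa using hs⟩
    · obtain ⟨a, b, hab, hab2⟩ := Finset.card_eq_two.mp h2
      exact ⟨a, b, by intro s hs; rw [hab2] at hs; simpa using hs⟩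
  obtain ⟨s1, s2, hmem⟩ := hmem
  obtain ⟨x, x', hxx, e1, e2⟩ := ThetaAux.allPear hp s1 s2
  obtain ⟨s, hsS, hd⟩ := hgen x x' hxx
  rcases hmem s (Finset.mem_coe.mp hsS) with rfl | rfl
  · exact hd e1
  · exact hd e2
end

section
/- Let p ≥ 2 be an integer and let G = Θ_{p,p,p+2}. Then for every vertex a of G there exist vertices b and c of G such that the set S = {a, b, c} is a vertex metric generator of G. -/
/-!
On `Θ_{p,p,p+2}` the distance is explicit: two vertices inside the same path are joined
along it, and otherwise a shortest path passes through `u` or `v`. This formula bounds the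
distance from above because the corresponding walks exist, and from below because it
changes by at most one along every edge.

Write `u₁ = a 0`, `v₁ = b 0` and `w_k = c (k - 1)`, `w_0 = u`. The pair `{u, u₁}`
distinguishes every two vertices except `v_k` and `w_k` for `k < p`, and these are
distinguished by `w_p`. The pair `{u₁, v₁}` distinguishes every two vertices except
`{w_{p-1}, w_{p+1}}` and `{v, w_{p-2}}`, and these are distinguished by every vertex other
than `u₁`, `v₁`, `w_p`. Hence `a = w_p` extends by `u, u₁`, `a = u₁` or `a = v₁` by `u` and
the other one, and every other `a` by `u₁, v₁`.
-/

namespace SimpleGraph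

variable {V : Type*} {G : SimpleGraph V}

lemma Walk.le_add_length_of_lipschitz {f : V → ℕ} (hf : ∀ x y, G.Adj x y → f x ≤ f y + 1)
    {x y : V} (w : G.Walk x y) : f x ≤ f y + w.length := by
  induction w with
  | nil => simp
  | cons h _ ih => have := hf _ _ h; rw [Walk.length_cons]; omega

lemma Connected.dist_eq_of_lipschitz {D : V → V → ℕ} (hG : G.Connected)
    (hself : ∀ x, D x x = 0) (hlip : ∀ s x y, G.Adj x y → D s x ≤ D s y + 1)
    (hle : ∀ x y, G.dist x y ≤ D x y) (x y : V) : G.dist x y = D x y := by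
  refine (hle x y).antisymm ?_
  obtain ⟨w, hw⟩ := hG.exists_walk_length_eq_dist y x
  have := w.le_add_length_of_lipschitz (hlip x)
  rwa [hself, zero_add, hw, dist_comm] at this

lemma exists_walk_length_eq_of_adj_succ (g : ℕ → V) {i j : ℕ} (hij : i ≤ j)
    (hg : ∀ k, i ≤ k → k < j → G.Adj (g k) (g (k + 1))) :
    ∃ w : G.Walk (g i) (g j), w.length = j - i := by
  induction j, hij using Nat.le_induction with
  | base => exact ⟨.nil, by simp⟩
  | succ j hij ih =>
    obtain ⟨w, hw⟩ := ih fun k hk hkj => hg k hk (by omega)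
    exact ⟨w.concat (hg j hij (by omega)), by simp only [Walk.length_concat]; omega⟩

end SimpleGraph

lemma IsVertexMetricGenerator.mono {V : Type*} {G : SimpleGraph V} {S T : Set V}
    (hS : IsVertexMetricGenerator G S) (hST : S ⊆ T) : IsVertexMetricGenerator G T :=
  fun x x' hne => (hS x x' hne).imp fun _ ⟨hs, h⟩ => ⟨hST hs, h⟩

section ThetaPaths

open SimpleGraph

variable {p q r : ℕ}

lemma thetaGraph_adj_uV_succ {i : ℕ} (hi : i < p) :
    (thetaGraph p q r).Adj (uV p q r i) (uV p q r (i + 1)) := by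
  unfold uV
  split_ifs <;> simp_all [thetaGraph, thetaRel] <;> omega

lemma thetaGraph_adj_vV_succ {i : ℕ} (hi : i < q) :
    (thetaGraph p q r).Adj (vV p q r i) (vV p q r (i + 1)) := by
  unfold vV
  split_ifs <;> simp_all [thetaGraph, thetaRel] <;> omega

lemma thetaGraph_adj_wV_succ {i : ℕ} (hi : i < r) :
    (thetaGraph p q r).Adj (wV p q r i) (wV p q r (i + 1)) := by
  unfold wV
  split_ifs <;> simp_all [thetaGraph, thetaRel] <;> omega

lemma exists_walk_uV {i j : ℕ} (hij : i ≤ j) (hj : j ≤ p) :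
    ∃ w : (thetaGraph p q r).Walk (uV p q r i) (uV p q r j), w.length = j - i :=
  SimpleGraph.exists_walk_length_eq_of_adj_succ _ hij fun _ _ hk =>
    thetaGraph_adj_uV_succ (by omega)

lemma exists_walk_vV {i j : ℕ} (hij : i ≤ j) (hj : j ≤ q) :
    ∃ w : (thetaGraph p q r).Walk (vV p q r i) (vV p q r j), w.length = j - i :=
  SimpleGraph.exists_walk_length_eq_of_adj_succ _ hij fun _ _ hk =>
    thetaGraph_adj_vV_succ (by omega)

lemma exists_walk_wV {i j : ℕ} (hij : i ≤ j) (hj : j ≤ r) :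
    ∃ w : (thetaGraph p q r).Walk (wV p q r i) (wV p q r j), w.length = j - i :=
  SimpleGraph.exists_walk_length_eq_of_adj_succ _ hij fun _ _ hk =>
    thetaGraph_adj_wV_succ (by omega)

@[simp] lemma uV_zero : uV p q r 0 = .u := by simp [uV]
@[simp] lemma vV_zero : vV p q r 0 = .u := by simp [vV]
@[simp] lemma wV_zero : wV p q r 0 = .u := by simp [wV]

lemma uV_self (hp : p ≠ 0) : uV p q r p = .v := by simp [uV, hp]
lemma vV_self (hq : q ≠ 0) : vV p q r q = .v := by simp [vV, hq]
lemma wV_self (hr : r ≠ 0) : wV p q r r = .v := by simp [wV, hr]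

lemma uV_succ (i : Fin (p - 1)) : uV p q r (i + 1) = .a i := by
  simp [uV]; omega
lemma vV_succ (i : Fin (q - 1)) : vV p q r (i + 1) = .b i := by
  simp [vV]; omega
lemma wV_succ (i : Fin (r - 1)) : wV p q r (i + 1) = .c i := by
  simp [wV]; omega

lemma thetaGraph_dist_a_a_le (i j : Fin (p - 1)) :
    (thetaGraph p q r).dist (.a i) (.a j) ≤ i - j + (j - i) := by
  wlog hij : (i : ℕ) ≤ j generalizing i j
  · rw [dist_comm]; have := this j i (by omega); omega
  obtain ⟨w, hw⟩ := exists_walk_uV (p := p) (q := q) (r := r) (Nat.succ_le_succ hij) (by omega)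
  have := dist_le (w.copy (uV_succ i) (uV_succ j))
  rw [Walk.length_copy, hw] at this
  omega

lemma thetaGraph_dist_b_b_le (i j : Fin (q - 1)) :
    (thetaGraph p q r).dist (.b i) (.b j) ≤ i - j + (j - i) := by
  wlog hij : (i : ℕ) ≤ j generalizing i j
  · rw [dist_comm]; have := this j i (by omega); omega
  obtain ⟨w, hw⟩ := exists_walk_vV (p := p) (q := q) (r := r) (Nat.succ_le_succ hij) (by omega)
  have := dist_le (w.copy (vV_succ i) (vV_succ j))
  rw [Walk.length_copy, hw] at this
  omega

lemma thetaGraph_dist_c_c_le (i j : Fin (r - 1)) :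
    (thetaGraph p q r).dist (.c i) (.c j) ≤ i - j + (j - i) := by
  wlog hij : (i : ℕ) ≤ j generalizing i j
  · rw [dist_comm]; have := this j i (by omega); omega
  obtain ⟨w, hw⟩ := exists_walk_wV (p := p) (q := q) (r := r) (Nat.succ_le_succ hij) (by omega)
  have := dist_le (w.copy (wV_succ i) (wV_succ j))
  rw [Walk.length_copy, hw] at this
  omega

end ThetaPaths

section ThetaPPP2

open ThetaVert SimpleGraph

variable {p : ℕ}

namespace ThetaVert

def distU : ThetaVert p p (p + 2) → ℕ
  | u => 0
  | v => p
  | a i => i + 1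
  | b i => i + 1
  | c i => i + 1

def distV : ThetaVert p p (p + 2) → ℕ
  | u => p
  | v => 0
  | a i => p - 1 - i
  | b i => p - 1 - i
  | c i => p + 1 - i

def pathIndex : ThetaVert p p (p + 2) → ℕ
  | u => 0
  | v => 1
  | a _ => 2
  | b _ => 3
  | c _ => 4

end ThetaVert

lemma exists_walk_u_length_eq_distU (hp : p ≠ 0) (x : ThetaVert p p (p + 2)) :
    ∃ w : (thetaGraph p p (p + 2)).Walk .u x, w.length = x.distU := by
  cases x with
  | u => exact ⟨.nil, rfl⟩
  | v =>
    obtain ⟨w, hw⟩ := exists_walk_uV (p := p) (q := p) (r := p + 2) (Nat.zero_le p) le_rfl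
    exact ⟨w.copy uV_zero (uV_self hp), by simp only [Walk.length_copy, hw, distU]; omega⟩
  | a i =>
    obtain ⟨w, hw⟩ := exists_walk_uV (p := p) (q := p) (r := p + 2)
      (Nat.zero_le (i + 1)) (by omega)
    exact ⟨w.copy uV_zero (uV_succ i), by simp only [Walk.length_copy, hw, distU]; omega⟩
  | b i =>
    obtain ⟨w, hw⟩ := exists_walk_vV (p := p) (q := p) (r := p + 2)
      (Nat.zero_le (i + 1)) (by omega)
    exact ⟨w.copy vV_zero (vV_succ i), by simp only [Walk.length_copy, hw, distU]; omega⟩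
  | c i =>
    obtain ⟨w, hw⟩ := exists_walk_wV (p := p) (q := p) (r := p + 2)
      (Nat.zero_le (i + 1)) (by omega)
    exact ⟨w.copy wV_zero (wV_succ i), by simp only [Walk.length_copy, hw, distU]; omega⟩

lemma exists_walk_v_length_eq_distV (hp : p ≠ 0) (x : ThetaVert p p (p + 2)) :
    ∃ w : (thetaGraph p p (p + 2)).Walk x .v, w.length = x.distV := by
  cases x with
  | u =>
    obtain ⟨w, hw⟩ := exists_walk_uV (p := p) (q := p) (r := p + 2) (Nat.zero_le p) le_rfl
    exact ⟨w.copy uV_zero (uV_self hp), by simp only [Walk.length_copy, hw, distV]; omega⟩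
  | v => exact ⟨.nil, rfl⟩
  | a i =>
    obtain ⟨w, hw⟩ := exists_walk_uV (p := p) (q := p) (r := p + 2)
      (show i + 1 ≤ p by omega) le_rfl
    exact ⟨w.copy (uV_succ i) (uV_self hp), by simp only [Walk.length_copy, hw, distV]; omega⟩
  | b i =>
    obtain ⟨w, hw⟩ := exists_walk_vV (p := p) (q := p) (r := p + 2)
      (show i + 1 ≤ p by omega) le_rfl
    exact ⟨w.copy (vV_succ i) (vV_self hp), by simp only [Walk.length_copy, hw, distV]; omega⟩
  | c i =>
    obtain ⟨w, hw⟩ := exists_walk_wV (p := p) (q := p) (r := p + 2)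
      (show i + 1 ≤ p + 2 by omega) le_rfl
    exact ⟨w.copy (wV_succ i) (wV_self (by omega)),
      by simp only [Walk.length_copy, hw, distV]; omega⟩

def thetaDist (p : ℕ) (x y : ThetaVert p p (p + 2)) : ℕ :=
  if x.pathIndex = y.pathIndex then x.distU - y.distU + (y.distU - x.distU)
  else min (x.distU + y.distU) (x.distV + y.distV)

lemma thetaDist_self (x : ThetaVert p p (p + 2)) : thetaDist p x x = 0 := by
  simp [thetaDist]

lemma thetaDist_le_of_adj (s : ThetaVert p p (p + 2)) {x y : ThetaVert p p (p + 2)}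
    (h : (thetaGraph p p (p + 2)).Adj x y) : thetaDist p s x ≤ thetaDist p s y + 1 := by
  rw [thetaGraph, fromRel_adj] at h
  obtain ⟨-, h⟩ := h
  cases x <;> cases y <;> cases s <;>
    simp only [thetaRel, thetaDist, distU, distV, pathIndex, reduceIte, Nat.reduceEqDiff,
      or_false, false_or] at h ⊢ <;> omega

lemma thetaGraph_connected (hp : p ≠ 0) : (thetaGraph p p (p + 2)).Connected :=
  (connected_iff_exists_forall_reachable _).2
    ⟨.u, fun x => (exists_walk_u_length_eq_distU hp x).elim fun w _ => ⟨w⟩⟩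

lemma dist_le_thetaDist (hp : p ≠ 0) (x y : ThetaVert p p (p + 2)) :
    (thetaGraph p p (p + 2)).dist x y ≤ thetaDist p x y := by
  unfold thetaDist
  split_ifs with h
  · cases x <;> cases y <;> simp only [pathIndex, Nat.reduceEqDiff] at h
    · simp
    · simp
    · exact (thetaGraph_dist_a_a_le _ _).trans (by simp only [distU]; omega)
    · exact (thetaGraph_dist_b_b_le _ _).trans (by simp only [distU]; omega)
    · exact (thetaGraph_dist_c_c_le _ _).trans (by simp only [distU]; omega)
  · obtain ⟨wx, hwx⟩ := exists_walk_u_length_eq_distU hp x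
    obtain ⟨wy, hwy⟩ := exists_walk_u_length_eq_distU hp y
    obtain ⟨wx', hwx'⟩ := exists_walk_v_length_eq_distV hp x
    obtain ⟨wy', hwy'⟩ := exists_walk_v_length_eq_distV hp y
    refine le_min ?_ ?_
    · simpa [hwx, hwy] using dist_le (wx.reverse.append wy)
    · simpa [hwx', hwy'] using dist_le (wx'.append wy'.reverse)

lemma thetaGraph_dist (hp : p ≠ 0) (x y : ThetaVert p p (p + 2)) :
    (thetaGraph p p (p + 2)).dist x y = thetaDist p x y :=
  (thetaGraph_connected hp).dist_eq_of_lipschitz thetaDist_self thetaDist_le_of_adj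
    (dist_le_thetaDist hp) x y

lemma exists_eq_b_c_of_thetaDist_eq (hp : 2 ≤ p) {x x' : ThetaVert p p (p + 2)} (hne : x ≠ x')
    (hu : thetaDist p .u x = thetaDist p .u x')
    (ha : thetaDist p (.a ⟨0, by omega⟩) x = thetaDist p (.a ⟨0, by omega⟩) x') :
    ∃ (i : Fin (p - 1)) (j : Fin (p + 2 - 1)), (i : ℕ) = j ∧ s(x, x') = s(.b i, .c j) := by
  cases x <;> cases x' <;>
    simp only [thetaDist, distU, distV, pathIndex, reduceIte, Nat.reduceEqDiff, ne_eq,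
      reduceCtorEq, ThetaVert.a.injEq, ThetaVert.b.injEq, ThetaVert.c.injEq, Fin.ext_iff,
      not_false_eq_true, not_true_eq_false] at hne hu ha ⊢ <;>
    first
      | omega
      | exact ⟨_, _, by omega, rfl⟩
      | exact ⟨_, _, by omega, Sym2.eq_swap⟩

lemma thetaDist_c_b_ne_c_c (hp : 2 ≤ p) {i : Fin (p - 1)} {j : Fin (p + 2 - 1)}
    (hij : (i : ℕ) = j) :
    thetaDist p (.c ⟨p - 1, by omega⟩) (.b i) ≠
      thetaDist p (.c ⟨p - 1, by omega⟩) (.c j) := by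
  simp only [thetaDist, distU, distV, pathIndex, reduceIte, Nat.reduceEqDiff]
  omega

lemma isVertexMetricGenerator_c_u_a (hp : 2 ≤ p) :
    IsVertexMetricGenerator (thetaGraph p p (p + 2))
      {.c ⟨p - 1, by omega⟩, .u, .a ⟨0, by omega⟩} := by
  intro x x' hne
  simp only [thetaGraph_dist (by omega : p ≠ 0), Set.mem_insert_iff, Set.mem_singleton_iff,
    exists_eq_or_imp, exists_eq_left]
  by_contra! h
  obtain ⟨hc, hu, ha⟩ := h
  obtain ⟨i, j, hij, hxx'⟩ := exists_eq_b_c_of_thetaDist_eq hp hne hu ha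
  rcases Sym2.eq_iff.1 hxx' with ⟨rfl, rfl⟩ | ⟨rfl, rfl⟩
  · exact thetaDist_c_b_ne_c_c hp hij hc
  · exact thetaDist_c_b_ne_c_c hp hij hc.symm

lemma sym2_eq_of_thetaDist_a_b_eq (hp : 2 ≤ p) {x x' : ThetaVert p p (p + 2)} (hne : x ≠ x')
    (ha : thetaDist p (.a ⟨0, by omega⟩) x = thetaDist p (.a ⟨0, by omega⟩) x')
    (hb : thetaDist p (.b ⟨0, by omega⟩) x = thetaDist p (.b ⟨0, by omega⟩) x') :
    s(x, x') = s(.c ⟨p, by omega⟩, .c ⟨p - 2, by omega⟩) ∨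
      (p = 2 ∧ s(x, x') = s(.u, .v)) ∨
      (3 ≤ p ∧ s(x, x') = s(.v, .c ⟨p - 3, by omega⟩)) := by
  cases x <;> cases x' <;>
    simp only [thetaDist, distU, distV, pathIndex, reduceIte, Nat.reduceEqDiff, ne_eq,
      reduceCtorEq, ThetaVert.a.injEq, ThetaVert.b.injEq, ThetaVert.c.injEq, Fin.ext_iff,
      not_false_eq_true, not_true_eq_false, Sym2.eq_iff, and_false, false_and, or_false,
      false_or, and_true, true_and] at hne ha hb ⊢ <;> omega

lemma thetaDist_ne_of_ne_a_b_c (hp : 2 ≤ p) {s : ThetaVert p p (p + 2)}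
    (hsa : s ≠ .a ⟨0, by omega⟩) (hsb : s ≠ .b ⟨0, by omega⟩)
    (hsc : s ≠ .c ⟨p - 1, by omega⟩) :
    thetaDist p s (.c ⟨p, by omega⟩) ≠ thetaDist p s (.c ⟨p - 2, by omega⟩) ∧
      (p = 2 → thetaDist p s .u ≠ thetaDist p s .v) ∧
      (3 ≤ p → thetaDist p s .v ≠ thetaDist p s (.c ⟨p - 3, by omega⟩)) := by
  cases s <;>
    simp only [thetaDist, distU, distV, pathIndex, reduceIte, Nat.reduceEqDiff, ne_eq,
      reduceCtorEq, ThetaVert.a.injEq, ThetaVert.b.injEq, ThetaVert.c.injEq, Fin.ext_iff,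
      not_false_eq_true] at hsa hsb hsc ⊢ <;> omega

lemma isVertexMetricGenerator_insert_a_b (hp : 2 ≤ p) {s : ThetaVert p p (p + 2)}
    (hsa : s ≠ .a ⟨0, by omega⟩) (hsb : s ≠ .b ⟨0, by omega⟩)
    (hsc : s ≠ .c ⟨p - 1, by omega⟩) :
    IsVertexMetricGenerator (thetaGraph p p (p + 2))
      {s, .a ⟨0, by omega⟩, .b ⟨0, by omega⟩} := by
  intro x x' hne
  simp only [thetaGraph_dist (by omega : p ≠ 0), Set.mem_insert_iff, Set.mem_singleton_iff,
    exists_eq_or_imp, exists_eq_left]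
  by_contra! h
  obtain ⟨hs, ha, hb⟩ := h
  obtain ⟨h₁, h₂, h₃⟩ := thetaDist_ne_of_ne_a_b_c hp hsa hsb hsc
  rcases sym2_eq_of_thetaDist_a_b_eq hp hne ha hb with hxx' | ⟨hp2, hxx'⟩ | ⟨hp3, hxx'⟩ <;>
    rcases Sym2.eq_iff.1 hxx' with ⟨hx, hx'⟩ | ⟨hx, hx'⟩ <;> rw [hx, hx'] at hs
  · exact h₁ hs
  · exact h₁ hs.symm
  · exact h₂ hp2 hs
  · exact h₂ hp2 hs.symm
  · exact h₃ hp3 hs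
  · exact h₃ hp3 hs.symm

end ThetaPPP2

/-- in `Θ_{p,p,p+2}` with `p ≥ 2`, every vertex `a` extends to a
vertex metric generator `{a, b, c}` of size three. -/
theorem exists_vertexGenerator_containing_theta_ppp2 (p : ℕ) (hp : 2 ≤ p)
    (a : ThetaVert p p (p + 2)) :
    ∃ b c : ThetaVert p p (p + 2),
      IsVertexMetricGenerator (thetaGraph p p (p + 2)) {a, b, c} := by
  have hu := isVertexMetricGenerator_insert_a_b hp (s := .u) (by simp) (by simp) (by simp)
  by_cases hc : a = .c ⟨p - 1, by omega⟩
  · exact ⟨.u, .a ⟨0, by omega⟩, hc ▸ isVertexMetricGenerator_c_u_a hp⟩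
  by_cases ha : a = .a ⟨0, by omega⟩
  · exact ⟨.u, .b ⟨0, by omega⟩, hu.mono (by simp [ha, Set.insert_subset_iff])⟩
  by_cases hb : a = .b ⟨0, by omega⟩
  · exact ⟨.u, .a ⟨0, by omega⟩, hu.mono (by simp [hb, Set.insert_subset_iff])⟩
  exact ⟨.a ⟨0, by omega⟩, .b ⟨0, by omega⟩,
    isVertexMetricGenerator_insert_a_b hp ha hb hc⟩
end

section
/- For every integer p ≥ 2, the vertex metric dimension of Θ_{p,p,p} equals 3 and the vertex metric dimension of Θ_{p,p,p+2} equals 3. -/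
set_option linter.unreachableTactic false
set_option linter.unusedTactic false
set_option linter.unnecessarySeqFocus false
namespace ThetaProof


/-- Generic: construct a walk of length `D x y`. -/
lemma exists_walk_of_pred {V : Type*} (G : SimpleGraph V) (D : V → V → ℕ)
    (h0 : ∀ x, D x x = 0)
    (h2 : ∀ x y, x ≠ y → ∃ z, G.Adj z y ∧ D x z + 1 = D x y) :
    ∀ x y, ∃ w : G.Walk x y, w.length = D x y := by
  intro x y
  generalize hn : D x y = n
  induction n generalizing y with
  | zero =>
    rcases eq_or_ne x y with rfl | hne
    · exact ⟨SimpleGraph.Walk.nil, rfl⟩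
    · obtain ⟨z, _, hz⟩ := h2 x y hne
      omega
  | succ n ih =>
    have hne : x ≠ y := by
      rintro rfl; rw [h0] at hn; omega
    obtain ⟨z, hadj, hz⟩ := h2 x y hne
    obtain ⟨w, hw⟩ := ih z (by omega)
    exact ⟨w.concat hadj, by rw [SimpleGraph.Walk.length_concat, hw]⟩

lemma D_le_length {V : Type*} (G : SimpleGraph V) (D : V → V → ℕ)
    (h0 : ∀ x, D x x = 0)
    (h1 : ∀ x y z, G.Adj x z → D x y ≤ D z y + 1) :
    ∀ x y (w : G.Walk x y), D x y ≤ w.length := by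
  intro x y w
  induction w with
  | nil => simp [h0]
  | @cons a b c h w ih =>
    have := h1 a c b h
    simp only [SimpleGraph.Walk.length_cons]
    omega

lemma dist_eq_of_D {V : Type*} (G : SimpleGraph V) (D : V → V → ℕ)
    (h0 : ∀ x, D x x = 0)
    (h1 : ∀ x y z, G.Adj x z → D x y ≤ D z y + 1)
    (h2 : ∀ x y, x ≠ y → ∃ z, G.Adj z y ∧ D x z + 1 = D x y) :
    ∀ x y, G.dist x y = D x y := by
  intro x y
  obtain ⟨w, hw⟩ := exists_walk_of_pred G D h0 h2 x y
  refine le_antisymm (hw ▸ SimpleGraph.dist_le w) ?_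
  obtain ⟨w', hw'⟩ := (SimpleGraph.Reachable.exists_walk_length_eq_dist ⟨w⟩)
  calc D x y ≤ w'.length := D_le_length G D h0 h1 x y w'
  _ = _ := hw'

/-- Explicit distance function on `Θ_{p,p,r}` (valid for `p ≤ r ≤ p+2`, `2 ≤ p`). -/
def D (p r : ℕ) : ThetaVert p p r → ThetaVert p p r → ℕ
  | .u, .u => 0
  | .u, .v => p
  | .v, .u => p
  | .v, .v => 0
  | .u, .a i => i + 1
  | .a i, .u => i + 1
  | .u, .b i => i + 1
  | .b i, .u => i + 1
  | .u, .c i => i + 1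
  | .c i, .u => i + 1
  | .v, .a i => p - 1 - i
  | .a i, .v => p - 1 - i
  | .v, .b i => p - 1 - i
  | .b i, .v => p - 1 - i
  | .v, .c i => r - 1 - i
  | .c i, .v => r - 1 - i
  | .a i, .a j => ((i : ℕ) - j) + ((j : ℕ) - i)
  | .b i, .b j => ((i : ℕ) - j) + ((j : ℕ) - i)
  | .c i, .c j => min (((i : ℕ) - j) + ((j : ℕ) - i)) (p + r - (((i : ℕ) - j) + ((j : ℕ) - i)))
  | .a i, .b j => min ((i : ℕ) + j + 2) (2 * p - ((i : ℕ) + j + 2))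
  | .b i, .a j => min ((i : ℕ) + j + 2) (2 * p - ((i : ℕ) + j + 2))
  | .a i, .c j => min ((i : ℕ) + j + 2) (p + r - ((i : ℕ) + j + 2))
  | .c i, .a j => min ((i : ℕ) + j + 2) (p + r - ((i : ℕ) + j + 2))
  | .b i, .c j => min ((i : ℕ) + j + 2) (p + r - ((i : ℕ) + j + 2))
  | .c i, .b j => min ((i : ℕ) + j + 2) (p + r - ((i : ℕ) + j + 2))

set_option maxHeartbeats 3200000 in
lemma h1_theta (p r : ℕ) (hp : 2 ≤ p) (hpr : p ≤ r) (hrp : r ≤ p + 2) :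
    ∀ x y z, (thetaGraph p p r).Adj x z → D p r x y ≤ D p r z y + 1 := by
  intro x y z h
  rw [thetaGraph, SimpleGraph.fromRel_adj] at h
  rcases x with _|_|⟨i,hi⟩|⟨i,hi⟩|⟨i,hi⟩ <;>
  rcases z with _|_|⟨k,hk⟩|⟨k,hk⟩|⟨k,hk⟩ <;>
  rcases y with _|_|⟨j,hj⟩|⟨j,hj⟩|⟨j,hj⟩ <;>
  (try simp [thetaRel, D] at h ⊢) <;> omega
set_option maxHeartbeats 3200000 in
lemma h2_theta (p r : ℕ) (hp : 2 ≤ p) (hpr : p ≤ r) (hrp : r ≤ p + 2) :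
    ∀ x y, x ≠ y → ∃ z, (thetaGraph p p r).Adj z y ∧ D p r x z + 1 = D p r x y := by
  have hadj : ∀ z y : ThetaVert p p r, z ≠ y →
      (thetaRel p p r z y ∨ thetaRel p p r y z) → (thetaGraph p p r).Adj z y := by
    intro z y h1 h2; rw [thetaGraph, SimpleGraph.fromRel_adj]; exact ⟨h1, h2⟩
  intro x y hxy
  have hp1 : 1 ≤ p - 1 := by omega
  have hr1 : 1 ≤ r - 1 := by omega
  rcases y with _ | _ | ⟨j, hj⟩ | ⟨j, hj⟩ | ⟨j, hj⟩
  · -- y = u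
    rcases x with _ | _ | ⟨i, hi⟩ | ⟨i, hi⟩ | ⟨i, hi⟩
    · exact absurd rfl hxy
    · exact ⟨.a ⟨0, by omega⟩, hadj _ _ (by simp) (by simp [thetaRel]),
        by simp [D] <;> omega⟩
    · exact ⟨.a ⟨0, by omega⟩, hadj _ _ (by simp) (by simp [thetaRel]),
        by simp [D] <;> omega⟩
    · exact ⟨.b ⟨0, by omega⟩, hadj _ _ (by simp) (by simp [thetaRel]),
        by simp [D] <;> omega⟩
    · exact ⟨.c ⟨0, by omega⟩, hadj _ _ (by simp) (by simp [thetaRel]),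
        by simp [D] <;> omega⟩
  · -- y = v
    rcases x with _ | _ | ⟨i, hi⟩ | ⟨i, hi⟩ | ⟨i, hi⟩
    · exact ⟨.a ⟨p-2, by omega⟩, hadj _ _ (by simp) (by simp [thetaRel] <;> omega),
        by simp [D] <;> omega⟩
    · exact absurd rfl hxy
    · exact ⟨.a ⟨p-2, by omega⟩, hadj _ _ (by simp) (by simp [thetaRel] <;> omega),
        by simp [D] <;> omega⟩
    · exact ⟨.b ⟨p-2, by omega⟩, hadj _ _ (by simp) (by simp [thetaRel] <;> omega),
        by simp [D] <;> omega⟩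
    · exact ⟨.c ⟨r-2, by omega⟩, hadj _ _ (by simp) (by simp [thetaRel] <;> omega),
        by simp [D] <;> omega⟩
  · -- y = a j
    rcases x with _ | _ | ⟨i, hi⟩ | ⟨i, hi⟩ | ⟨i, hi⟩
    · -- x = u
      by_cases h0 : j = 0
      · exact ⟨.u, hadj _ _ (by simp) (by simp [thetaRel] <;> omega),
          by simp [D] <;> omega⟩
      · exact ⟨.a ⟨j-1, by omega⟩, hadj _ _ (by simp <;> omega) (by simp [thetaRel] <;> omega),
          by simp [D] <;> omega⟩
    · -- x = v
      by_cases h0 : j = p - 2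
      · exact ⟨.v, hadj _ _ (by simp) (by simp [thetaRel] <;> omega),
          by simp [D] <;> omega⟩
      · exact ⟨.a ⟨j+1, by omega⟩, hadj _ _ (by simp <;> omega) (by simp [thetaRel] <;> omega),
          by simp [D] <;> omega⟩
    · -- x = a i
      rcases lt_trichotomy i j with hij | hij | hij
      · exact ⟨.a ⟨j-1, by omega⟩, hadj _ _ (by simp <;> omega) (by simp [thetaRel] <;> omega),
          by simp [D] <;> omega⟩
      · exact absurd (by simp [hij]) hxy
      · exact ⟨.a ⟨j+1, by omega⟩, hadj _ _ (by simp <;> omega) (by simp [thetaRel] <;> omega),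
          by simp [D] <;> omega⟩
    · -- x = b i
      by_cases hside : i + j + 2 ≤ 2*p - (i + j + 2)
      · by_cases h0 : j = 0
        · exact ⟨.u, hadj _ _ (by simp) (by simp [thetaRel] <;> omega),
            by simp [D] <;> omega⟩
        · exact ⟨.a ⟨j-1, by omega⟩, hadj _ _ (by simp <;> omega) (by simp [thetaRel] <;> omega),
            by simp [D] <;> omega⟩
      · by_cases h0 : j = p - 2
        · exact ⟨.v, hadj _ _ (by simp) (by simp [thetaRel] <;> omega),
            by simp [D] <;> omega⟩
        · exact ⟨.a ⟨j+1, by omega⟩, hadj _ _ (by simp <;> omega) (by simp [thetaRel] <;> omega),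
            by simp [D] <;> omega⟩
    · -- x = c i
      by_cases hside : i + j + 2 ≤ p + r - (i + j + 2)
      · by_cases h0 : j = 0
        · exact ⟨.u, hadj _ _ (by simp) (by simp [thetaRel] <;> omega),
            by simp [D] <;> omega⟩
        · exact ⟨.a ⟨j-1, by omega⟩, hadj _ _ (by simp <;> omega) (by simp [thetaRel] <;> omega),
            by simp [D] <;> omega⟩
      · by_cases h0 : j = p - 2
        · exact ⟨.v, hadj _ _ (by simp) (by simp [thetaRel] <;> omega),
            by simp [D] <;> omega⟩
        · exact ⟨.a ⟨j+1, by omega⟩, hadj _ _ (by simp <;> omega) (by simp [thetaRel] <;> omega),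
            by simp [D] <;> omega⟩
  · -- y = b j
    rcases x with _ | _ | ⟨i, hi⟩ | ⟨i, hi⟩ | ⟨i, hi⟩
    · by_cases h0 : j = 0
      · exact ⟨.u, hadj _ _ (by simp) (by simp [thetaRel] <;> omega),
          by simp [D] <;> omega⟩
      · exact ⟨.b ⟨j-1, by omega⟩, hadj _ _ (by simp <;> omega) (by simp [thetaRel] <;> omega),
          by simp [D] <;> omega⟩
    · by_cases h0 : j = p - 2
      · exact ⟨.v, hadj _ _ (by simp) (by simp [thetaRel] <;> omega),
          by simp [D] <;> omega⟩
      · exact ⟨.b ⟨j+1, by omega⟩, hadj _ _ (by simp <;> omega) (by simp [thetaRel] <;> omega),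
          by simp [D] <;> omega⟩
    · -- x = a i
      by_cases hside : i + j + 2 ≤ 2*p - (i + j + 2)
      · by_cases h0 : j = 0
        · exact ⟨.u, hadj _ _ (by simp) (by simp [thetaRel] <;> omega),
            by simp [D] <;> omega⟩
        · exact ⟨.b ⟨j-1, by omega⟩, hadj _ _ (by simp <;> omega) (by simp [thetaRel] <;> omega),
            by simp [D] <;> omega⟩
      · by_cases h0 : j = p - 2
        · exact ⟨.v, hadj _ _ (by simp) (by simp [thetaRel] <;> omega),
            by simp [D] <;> omega⟩
        · exact ⟨.b ⟨j+1, by omega⟩, hadj _ _ (by simp <;> omega) (by simp [thetaRel] <;> omega),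
            by simp [D] <;> omega⟩
    · -- x = b i
      rcases lt_trichotomy i j with hij | hij | hij
      · exact ⟨.b ⟨j-1, by omega⟩, hadj _ _ (by simp <;> omega) (by simp [thetaRel] <;> omega),
          by simp [D] <;> omega⟩
      · exact absurd (by simp [hij]) hxy
      · exact ⟨.b ⟨j+1, by omega⟩, hadj _ _ (by simp <;> omega) (by simp [thetaRel] <;> omega),
          by simp [D] <;> omega⟩
    · -- x = c i
      by_cases hside : i + j + 2 ≤ p + r - (i + j + 2)
      · by_cases h0 : j = 0
        · exact ⟨.u, hadj _ _ (by simp) (by simp [thetaRel] <;> omega),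
            by simp [D] <;> omega⟩
        · exact ⟨.b ⟨j-1, by omega⟩, hadj _ _ (by simp <;> omega) (by simp [thetaRel] <;> omega),
            by simp [D] <;> omega⟩
      · by_cases h0 : j = p - 2
        · exact ⟨.v, hadj _ _ (by simp) (by simp [thetaRel] <;> omega),
            by simp [D] <;> omega⟩
        · exact ⟨.b ⟨j+1, by omega⟩, hadj _ _ (by simp <;> omega) (by simp [thetaRel] <;> omega),
            by simp [D] <;> omega⟩
  · -- y = c j
    rcases x with _ | _ | ⟨i, hi⟩ | ⟨i, hi⟩ | ⟨i, hi⟩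
    · by_cases h0 : j = 0
      · exact ⟨.u, hadj _ _ (by simp) (by simp [thetaRel] <;> omega),
          by simp [D] <;> omega⟩
      · exact ⟨.c ⟨j-1, by omega⟩, hadj _ _ (by simp <;> omega) (by simp [thetaRel] <;> omega),
          by simp [D] <;> omega⟩
    · by_cases h0 : j = r - 2
      · exact ⟨.v, hadj _ _ (by simp) (by simp [thetaRel] <;> omega),
          by simp [D] <;> omega⟩
      · exact ⟨.c ⟨j+1, by omega⟩, hadj _ _ (by simp <;> omega) (by simp [thetaRel] <;> omega),
          by simp [D] <;> omega⟩
    · -- x = a i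
      by_cases hside : i + j + 2 ≤ p + r - (i + j + 2)
      · by_cases h0 : j = 0
        · exact ⟨.u, hadj _ _ (by simp) (by simp [thetaRel] <;> omega),
            by simp [D] <;> omega⟩
        · exact ⟨.c ⟨j-1, by omega⟩, hadj _ _ (by simp <;> omega) (by simp [thetaRel] <;> omega),
            by simp [D] <;> omega⟩
      · by_cases h0 : j = r - 2
        · exact ⟨.v, hadj _ _ (by simp) (by simp [thetaRel] <;> omega),
            by simp [D] <;> omega⟩
        · exact ⟨.c ⟨j+1, by omega⟩, hadj _ _ (by simp <;> omega) (by simp [thetaRel] <;> omega),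
            by simp [D] <;> omega⟩
    · -- x = b i
      by_cases hside : i + j + 2 ≤ p + r - (i + j + 2)
      · by_cases h0 : j = 0
        · exact ⟨.u, hadj _ _ (by simp) (by simp [thetaRel] <;> omega),
            by simp [D] <;> omega⟩
        · exact ⟨.c ⟨j-1, by omega⟩, hadj _ _ (by simp <;> omega) (by simp [thetaRel] <;> omega),
            by simp [D] <;> omega⟩
      · by_cases h0 : j = r - 2
        · exact ⟨.v, hadj _ _ (by simp) (by simp [thetaRel] <;> omega),
            by simp [D] <;> omega⟩
        · exact ⟨.c ⟨j+1, by omega⟩, hadj _ _ (by simp <;> omega) (by simp [thetaRel] <;> omega),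
            by simp [D] <;> omega⟩
    · -- x = c i
      rcases lt_trichotomy i j with hij | hij | hij
      · exact ⟨.c ⟨j-1, by omega⟩, hadj _ _ (by simp <;> omega) (by simp [thetaRel] <;> omega),
          by simp [D] <;> omega⟩
      · exact absurd (by simp [hij]) hxy
      · exact ⟨.c ⟨j+1, by omega⟩, hadj _ _ (by simp <;> omega) (by simp [thetaRel] <;> omega),
          by simp [D] <;> omega⟩

lemma dist_theta (p r : ℕ) (hp : 2 ≤ p) (hpr : p ≤ r) (hrp : r ≤ p + 2) :
    ∀ x y, (thetaGraph p p r).dist x y = D p r x y := by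
  refine dist_eq_of_D _ _ ?_ (h1_theta p r hp hpr hrp) (h2_theta p r hp hpr hrp)
  intro x; rcases x with _ | _ | i | i | i <;> simp [D] <;> omega
set_option maxHeartbeats 3200000 in
lemma inj_theta (p r : ℕ) (hp : 2 ≤ p) (hpr : p ≤ r) (hrp : r ≤ p + 2) :
    ∀ x y : ThetaVert p p r,
      D p r .u x = D p r .u y →
      D p r (.a ⟨0, by omega⟩) x = D p r (.a ⟨0, by omega⟩) y →
      D p r (.b ⟨0, by omega⟩) x = D p r (.b ⟨0, by omega⟩) y → x = y := by
  intro x y h1 h2 h3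
  rcases x with _|_|⟨i,hi⟩|⟨i,hi⟩|⟨i,hi⟩ <;> rcases y with _|_|⟨k,hk⟩|⟨k,hk⟩|⟨k,hk⟩ <;>
    (try simp [D] at h1 h2 h3 ⊢) <;> omega
set_option maxHeartbeats 6400000 in
lemma fool_ab (p e : ℕ) (hp : 2 ≤ p) (he : e ≤ 1) (i j : ℕ)
    (hi : i < p - 1) (hj : j < p - 1) :
    ∃ x y : ThetaVert p p (p + 2*e), x ≠ y ∧
      D p (p + 2*e) (.a ⟨i, hi⟩) x = D p (p + 2*e) (.a ⟨i, hi⟩) y ∧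
      D p (p + 2*e) (.b ⟨j, hj⟩) x = D p (p + 2*e) (.b ⟨j, hj⟩) y := by
  by_cases hij : i = j
  · subst hij
    by_cases he0 : e = 0
    · subst he0
      by_cases hx : i = p - 2 <;> by_cases hy : i = 0
      · exact ⟨.u, .v, by simp, by simp [D] <;> omega, by simp [D] <;> omega⟩
      · exact ⟨.u, .c ⟨p-i-1, by omega⟩, by simp, by simp [D] <;> omega, by simp [D] <;> omega⟩
      · exact ⟨.c ⟨p-i-3, by omega⟩, .v, by simp, by simp [D] <;> omega, by simp [D] <;> omega⟩
      · exact ⟨.c ⟨p-i-3, by omega⟩, .c ⟨p-i-1, by omega⟩, by simp <;> omega,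
          by simp [D] <;> omega, by simp [D] <;> omega⟩
    · exact ⟨.c ⟨p-i-2, by omega⟩, .c ⟨p-i, by omega⟩, by simp <;> omega,
        by simp [D] <;> omega, by simp [D] <;> omega⟩
  · by_cases hge : p ≤ i + j + 2
    · by_cases hb : i + j + 2 = p
      · rcases Nat.lt_or_ge j i with h | h
        · exact ⟨.a ⟨i-j-1, by omega⟩, .v, by simp, by simp [D] <;> omega, by simp [D] <;> omega⟩
        · exact ⟨.b ⟨j-i-1, by omega⟩, .v, by simp, by simp [D] <;> omega, by simp [D] <;> omega⟩
      · rcases Nat.lt_or_ge j i with h | h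
        · exact ⟨.a ⟨i-j-1, by omega⟩, .c ⟨2*p+2*e-i-j-3, by omega⟩, by simp,
            by simp [D] <;> omega, by simp [D] <;> omega⟩
        · exact ⟨.b ⟨j-i-1, by omega⟩, .c ⟨2*p+2*e-i-j-3, by omega⟩, by simp,
            by simp [D] <;> omega, by simp [D] <;> omega⟩
    · rcases Nat.lt_or_ge i j with h | h
      · exact ⟨.a ⟨p-j+i-1, by omega⟩, .c ⟨p-i-j-3, by omega⟩, by simp,
          by simp [D] <;> omega, by simp [D] <;> omega⟩
      · exact ⟨.b ⟨p-i+j-1, by omega⟩, .c ⟨p-i-j-3, by omega⟩, by simp,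
          by simp [D] <;> omega, by simp [D] <;> omega⟩

set_option maxHeartbeats 6400000 in
lemma fool_ac (p e : ℕ) (hp : 2 ≤ p) (he : e ≤ 1) (i k : ℕ)
    (hi : i < p - 1) (hk : k < p + 2*e - 1) :
    ∃ x y : ThetaVert p p (p + 2*e), x ≠ y ∧
      D p (p + 2*e) (.a ⟨i, hi⟩) x = D p (p + 2*e) (.a ⟨i, hi⟩) y ∧
      D p (p + 2*e) (.c ⟨k, hk⟩) x = D p (p + 2*e) (.c ⟨k, hk⟩) y := by
  by_cases hR1 : k ≤ i + e ∧ p + e ≤ i + k + 2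
  · by_cases hx : k = i + e <;> by_cases hy : i + k + 2 = p + e
    · exact ⟨.u, .v, by simp, by simp [D] <;> omega, by simp [D] <;> omega⟩
    · exact ⟨.u, .b ⟨2*p+e-i-k-3, by omega⟩, by simp, by simp [D] <;> omega,
        by simp [D] <;> omega⟩
    · exact ⟨.a ⟨i+e-k-1, by omega⟩, .v, by simp, by simp [D] <;> omega,
        by simp [D] <;> omega⟩
    · exact ⟨.a ⟨i+e-k-1, by omega⟩, .b ⟨2*p+e-i-k-3, by omega⟩, by simp,
        by simp [D] <;> omega, by simp [D] <;> omega⟩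
  · by_cases hR2 : i + e ≤ k ∧ i + k + 2 ≤ p + e
    · by_cases hx : k = i + e <;> by_cases hy : i + k + 2 = p + e
      · exact ⟨.v, .u, by simp, by simp [D] <;> omega, by simp [D] <;> omega⟩
      · exact ⟨.v, .b ⟨p+e-i-k-3, by omega⟩, by simp, by simp [D] <;> omega,
          by simp [D] <;> omega⟩
      · exact ⟨.a ⟨p+e+i-k-1, by omega⟩, .u, by simp, by simp [D] <;> omega,
          by simp [D] <;> omega⟩
      · exact ⟨.a ⟨p+e+i-k-1, by omega⟩, .b ⟨p+e-i-k-3, by omega⟩, by simp,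
          by simp [D] <;> omega, by simp [D] <;> omega⟩
    · by_cases hG1 : k + 1 ≤ i + e
      · exact ⟨.c ⟨p-i+k+e-1, by omega⟩, .b ⟨p+e-i-k-3, by omega⟩, by simp,
          by simp [D] <;> omega, by simp [D] <;> omega⟩
      · exact ⟨.c ⟨k-i-e-1, by omega⟩, .b ⟨2*p+e-i-k-3, by omega⟩, by simp,
          by simp [D] <;> omega, by simp [D] <;> omega⟩

set_option maxHeartbeats 6400000 in
lemma fool_bc (p e : ℕ) (hp : 2 ≤ p) (he : e ≤ 1) (i k : ℕ)
    (hi : i < p - 1) (hk : k < p + 2*e - 1) :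
    ∃ x y : ThetaVert p p (p + 2*e), x ≠ y ∧
      D p (p + 2*e) (.b ⟨i, hi⟩) x = D p (p + 2*e) (.b ⟨i, hi⟩) y ∧
      D p (p + 2*e) (.c ⟨k, hk⟩) x = D p (p + 2*e) (.c ⟨k, hk⟩) y := by
  by_cases hR1 : k ≤ i + e ∧ p + e ≤ i + k + 2
  · by_cases hx : k = i + e <;> by_cases hy : i + k + 2 = p + e
    · exact ⟨.u, .v, by simp, by simp [D] <;> omega, by simp [D] <;> omega⟩
    · exact ⟨.u, .a ⟨2*p+e-i-k-3, by omega⟩, by simp, by simp [D] <;> omega,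
        by simp [D] <;> omega⟩
    · exact ⟨.b ⟨i+e-k-1, by omega⟩, .v, by simp, by simp [D] <;> omega,
        by simp [D] <;> omega⟩
    · exact ⟨.b ⟨i+e-k-1, by omega⟩, .a ⟨2*p+e-i-k-3, by omega⟩, by simp,
        by simp [D] <;> omega, by simp [D] <;> omega⟩
  · by_cases hR2 : i + e ≤ k ∧ i + k + 2 ≤ p + e
    · by_cases hx : k = i + e <;> by_cases hy : i + k + 2 = p + e
      · exact ⟨.v, .u, by simp, by simp [D] <;> omega, by simp [D] <;> omega⟩
      · exact ⟨.v, .a ⟨p+e-i-k-3, by omega⟩, by simp, by simp [D] <;> omega,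
          by simp [D] <;> omega⟩
      · exact ⟨.b ⟨p+e+i-k-1, by omega⟩, .u, by simp, by simp [D] <;> omega,
          by simp [D] <;> omega⟩
      · exact ⟨.b ⟨p+e+i-k-1, by omega⟩, .a ⟨p+e-i-k-3, by omega⟩, by simp,
          by simp [D] <;> omega, by simp [D] <;> omega⟩
    · by_cases hG1 : k + 1 ≤ i + e
      · exact ⟨.c ⟨p-i+k+e-1, by omega⟩, .a ⟨p+e-i-k-3, by omega⟩, by simp,
          by simp [D] <;> omega, by simp [D] <;> omega⟩
      · exact ⟨.c ⟨k-i-e-1, by omega⟩, .a ⟨2*p+e-i-k-3, by omega⟩, by simp,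
          by simp [D] <;> omega, by simp [D] <;> omega⟩
set_option maxHeartbeats 6400000 in
lemma fool_theta (p e : ℕ) (hp : 2 ≤ p) (he : e ≤ 1) :
    ∀ s t : ThetaVert p p (p+2*e), ∃ x y : ThetaVert p p (p+2*e), x ≠ y ∧
      D p (p+2*e) s x = D p (p+2*e) s y ∧ D p (p+2*e) t x = D p (p+2*e) t y := by
  have hp1 : 0 < p - 1 := by omega
  have hr1 : 0 < p + 2*e - 1 := by omega
  have hp2 : p - 2 < p - 1 := by omega
  have hr2 : p + 2*e - 2 < p + 2*e - 1 := by omega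
  intro s t
  rcases s with _|_|⟨i,hi⟩|⟨i,hi⟩|⟨i,hi⟩ <;> rcases t with _|_|⟨j,hj⟩|⟨j,hj⟩|⟨j,hj⟩
  · exact ⟨.a ⟨0,hp1⟩, .b ⟨0,hp1⟩, by simp, by simp [D], by simp [D]⟩
  · exact ⟨.a ⟨0,hp1⟩, .b ⟨0,hp1⟩, by simp, by simp [D], by simp [D]⟩
  · exact ⟨.b ⟨0,hp1⟩, .c ⟨0,hr1⟩, by simp, by simp [D], by simp [D] <;> omega⟩
  · exact ⟨.a ⟨0,hp1⟩, .c ⟨0,hr1⟩, by simp, by simp [D], by simp [D] <;> omega⟩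
  · exact ⟨.a ⟨0,hp1⟩, .b ⟨0,hp1⟩, by simp, by simp [D], by simp [D]⟩
  · exact ⟨.a ⟨0,hp1⟩, .b ⟨0,hp1⟩, by simp, by simp [D], by simp [D]⟩
  · exact ⟨.a ⟨0,hp1⟩, .b ⟨0,hp1⟩, by simp, by simp [D], by simp [D]⟩
  · exact ⟨.b ⟨p-2,hp2⟩, .c ⟨p+2*e-2,hr2⟩, by simp, by simp [D] <;> omega,
      by simp [D] <;> omega⟩
  · exact ⟨.a ⟨p-2,hp2⟩, .c ⟨p+2*e-2,hr2⟩, by simp, by simp [D] <;> omega,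
      by simp [D] <;> omega⟩
  · exact ⟨.a ⟨0,hp1⟩, .b ⟨0,hp1⟩, by simp, by simp [D], by simp [D]⟩
  · exact ⟨.b ⟨0,hp1⟩, .c ⟨0,hr1⟩, by simp, by simp [D] <;> omega, by simp [D]⟩
  · exact ⟨.b ⟨p-2,hp2⟩, .c ⟨p+2*e-2,hr2⟩, by simp, by simp [D] <;> omega,
      by simp [D] <;> omega⟩
  · exact ⟨.b ⟨0,hp1⟩, .c ⟨0,hr1⟩, by simp, by simp [D] <;> omega, by simp [D] <;> omega⟩
  · exact fool_ab p e hp he i j hi hj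
  · exact fool_ac p e hp he i j hi hj
  · exact ⟨.a ⟨0,hp1⟩, .c ⟨0,hr1⟩, by simp, by simp [D] <;> omega, by simp [D]⟩
  · exact ⟨.a ⟨p-2,hp2⟩, .c ⟨p+2*e-2,hr2⟩, by simp, by simp [D] <;> omega,
      by simp [D] <;> omega⟩
  · obtain ⟨x, y, h1, h2, h3⟩ := fool_ab p e hp he j i hj hi
    exact ⟨x, y, h1, h3, h2⟩
  · exact ⟨.a ⟨0,hp1⟩, .c ⟨0,hr1⟩, by simp, by simp [D] <;> omega, by simp [D] <;> omega⟩
  · exact fool_bc p e hp he i j hi hj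
  · exact ⟨.a ⟨0,hp1⟩, .b ⟨0,hp1⟩, by simp, by simp [D], by simp [D]⟩
  · exact ⟨.a ⟨0,hp1⟩, .b ⟨0,hp1⟩, by simp, by simp [D], by simp [D]⟩
  · obtain ⟨x, y, h1, h2, h3⟩ := fool_ac p e hp he j i hj hi
    exact ⟨x, y, h1, h3, h2⟩
  · obtain ⟨x, y, h1, h2, h3⟩ := fool_bc p e hp he j i hj hi
    exact ⟨x, y, h1, h3, h2⟩
  · exact ⟨.a ⟨0,hp1⟩, .b ⟨0,hp1⟩, by simp, by simp [D], by simp [D]⟩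

lemma dim_theta (p e : ℕ) (hp : 2 ≤ p) (he : e ≤ 1) :
    vertexMetricDim (thetaGraph p p (p + 2*e)) = 3 := by
  have hp1 : 0 < p - 1 := by omega
  have hdist := dist_theta p (p+2*e) hp (by omega) (by omega)
  have hmem : 3 ∈ {n : ℕ | ∃ S : Finset (ThetaVert p p (p+2*e)), S.card = n ∧
      IsVertexMetricGenerator (thetaGraph p p (p+2*e)) ↑S} := by
    refine ⟨{.u, .a ⟨0,hp1⟩, .b ⟨0,hp1⟩}, ?_, ?_⟩
    · rw [Finset.card_insert_of_notMem (by simp), Finset.card_insert_of_notMem (by simp),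
        Finset.card_singleton]
    · intro x x' hxx
      by_contra hno
      push_neg at hno
      simp only [Finset.coe_insert, Finset.coe_singleton, Set.mem_insert_iff,
        Set.mem_singleton_iff] at hno
      have h1 := hno .u (by tauto)
      have h2 := hno (.a ⟨0,hp1⟩) (by tauto)
      have h3 := hno (.b ⟨0,hp1⟩) (by tauto)
      rw [hdist, hdist] at h1 h2 h3
      exact hxx (inj_theta p (p+2*e) hp (by omega) (by omega) x x' h1 h2 h3)
  refine le_antisymm (Nat.sInf_le hmem) (le_csInf ⟨3, hmem⟩ ?_)
  rintro n ⟨S, hcard, hgen⟩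
  by_contra hlt
  push_neg at hlt
  have hS2 : S.card ≤ 2 := by omega
  obtain ⟨s, t, hst⟩ : ∃ s t : ThetaVert p p (p+2*e), ∀ w ∈ S, w = s ∨ w = t := by
    have hc : S.card = 0 ∨ S.card = 1 ∨ S.card = 2 := by omega
    rcases hc with h | h | h
    · refine ⟨.u, .u, fun w hw => ?_⟩
      rw [Finset.card_eq_zero] at h; subst h; simp at hw
    · obtain ⟨s, rfl⟩ := Finset.card_eq_one.mp h
      exact ⟨s, s, fun w hw => by simp at hw; tauto⟩
    · obtain ⟨s, t, hst, rfl⟩ := Finset.card_eq_two.mp h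
      exact ⟨s, t, fun w hw => by simp at hw; tauto⟩
  obtain ⟨x, y, hxy, hsx, htx⟩ := fool_theta p e hp he s t
  obtain ⟨w, hw, hne⟩ := hgen x y hxy
  rcases hst w hw with rfl | rfl
  · rw [hdist, hdist] at hne; exact hne hsx
  · rw [hdist, hdist] at hne; exact hne htx
end ThetaProof

/-- for every `p ≥ 2`, `dim Θ_{p,p,p} = 3` and `dim Θ_{p,p,p+2} = 3`. -/
theorem vertexMetricDim_theta_eq_three (p : ℕ) (hp : 2 ≤ p) :
    vertexMetricDim (thetaGraph p p p) = 3 ∧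
      vertexMetricDim (thetaGraph p p (p + 2)) = 3 :=
  ⟨ThetaProof.dim_theta p 0 hp (by omega), ThetaProof.dim_theta p 1 hp (by omega)⟩
end

section
/- Let G = Θ_{p,q,r} where q ≥ 3 is odd and r is even (no ordering among p, q, r is required). Then the set S = {v_{(q−1)/2}, w_{r/2}} is a vertex metric generator of G. -/
lemma walk_lower {V : Type*} (G : SimpleGraph V) (f : V → ℕ)
    (hlip : ∀ x y, G.Adj x y → f x ≤ f y + 1) :
    ∀ {u v : V} (W : G.Walk u v), f v ≤ f u + W.length := by
  intro u v W
  induction W with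
  | nil => simp
  | cons h W ih =>
    have h2 := hlip _ _ h.symm
    simp only [SimpleGraph.Walk.length_cons]
    omega

lemma dist_eq_of {V : Type*} (G : SimpleGraph V) (s : V) (f : V → ℕ)
    (h0 : f s = 0)
    (hlip : ∀ x y, G.Adj x y → f x ≤ f y + 1)
    (hdesc : ∀ x, x ≠ s → ∃ y, G.Adj y x ∧ f y + 1 = f x) :
    ∀ x, G.dist s x = f x := by
  have key : ∀ n x, f x = n → G.Reachable s x ∧ G.dist s x ≤ f x := by
    intro n
    induction n using Nat.strong_induction_on with
    | _ n ih =>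
      intro x hx
      by_cases hxs : x = s
      · subst hxs; exact ⟨SimpleGraph.Reachable.refl x, by simp [h0]⟩
      · obtain ⟨y, hadj, hy⟩ := hdesc x hxs
        have hylt : f y < n := by omega
        obtain ⟨hre, hd⟩ := ih (f y) hylt y rfl
        obtain ⟨W, hW⟩ := hre.exists_walk_length_eq_dist
        refine ⟨hre.trans hadj.reachable, ?_⟩
        calc G.dist s x ≤ (W.concat hadj).length := SimpleGraph.dist_le _
          _ = W.length + 1 := SimpleGraph.Walk.length_concat _ _
          _ ≤ f y + 1 := by omega
          _ = f x := hy
  intro x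
  obtain ⟨hre, hd⟩ := key (f x) x rfl
  obtain ⟨W, hW⟩ := hre.exists_walk_length_eq_dist
  have := walk_lower G f hlip W
  omega

def fB (p q r k : ℕ) : ThetaVert p q r → ℕ
  | .u => k
  | .v => k + 1
  | .a i => k + min ((i : ℕ) + 1) (p - (i : ℕ))
  | .b j => Nat.dist k ((j : ℕ) + 1)
  | .c l => k + min ((l : ℕ) + 1) (r - (l : ℕ))

def fC (p q r m : ℕ) : ThetaVert p q r → ℕ
  | .u => m
  | .v => m
  | .a i => m + min ((i : ℕ) + 1) (p - 1 - (i : ℕ))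
  | .b j => m + min ((j : ℕ) + 1) (q - 1 - (j : ℕ))
  | .c l => Nat.dist m ((l : ℕ) + 1)

lemma lipB (p q r k : ℕ) (hp : 1 ≤ p) (hq : q = 2*k+1) (hk : 1 ≤ k) :
    ∀ x y : ThetaVert p q r, thetaRel p q r x y →
      fB p q r k x ≤ fB p q r k y + 1 ∧ fB p q r k y ≤ fB p q r k x + 1 := by
  intro x y h
  cases x <;> cases y <;>
    simp only [thetaRel, fB, Nat.dist] at h ⊢ <;>
    first
    | omega
    | (rename_i i j; have := i.isLt; have := j.isLt; omega)
    | (rename_i i; have := i.isLt; omega)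

lemma lipC (p q r m : ℕ) (hp : 1 ≤ p) (hq : 1 ≤ q) (hr : r = 2*m) (hm : 1 ≤ m) :
    ∀ x y : ThetaVert p q r, thetaRel p q r x y →
      fC p q r m x ≤ fC p q r m y + 1 ∧ fC p q r m y ≤ fC p q r m x + 1 := by
  intro x y h
  cases x <;> cases y <;>
    simp only [thetaRel, fC, Nat.dist] at h ⊢ <;>
    first
    | omega
    | (rename_i i j; have := i.isLt; have := j.isLt; omega)
    | (rename_i i; have := i.isLt; omega)

lemma injBC (p q r k m : ℕ) (hp : 1 ≤ p) (hq : q = 2*k+1) (hk : 1 ≤ k)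
    (hr : r = 2*m) (hm : 1 ≤ m) :
    ∀ x y : ThetaVert p q r, fB p q r k x = fB p q r k y →
      fC p q r m x = fC p q r m y → x = y := by
  intro x y h1 h2
  cases x <;> cases y <;>
    simp only [fB, fC, Nat.dist, ThetaVert.a.injEq, ThetaVert.b.injEq,
      ThetaVert.c.injEq, Fin.ext_iff] at h1 h2 ⊢ <;>
    first
    | rfl
    | (rename_i i j; have := i.isLt; have := j.isLt; omega)
    | (rename_i i; have := i.isLt; omega)
    | omega

lemma theta_adj {p q r : ℕ} {x y : ThetaVert p q r} (hne : x ≠ y)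
    (h : thetaRel p q r x y ∨ thetaRel p q r y x) : (thetaGraph p q r).Adj x y := by
  simp only [thetaGraph, SimpleGraph.fromRel_adj]
  exact ⟨hne, h⟩

lemma descB (p q r k m : ℕ) (hp : 1 ≤ p) (hq : q = 2*k+1) (hk : 1 ≤ k)
    (hr : r = 2*m) (hm : 1 ≤ m) (hkb : k - 1 < q - 1) :
    ∀ x : ThetaVert p q r, x ≠ .b ⟨k-1, hkb⟩ →
      ∃ y, (thetaGraph p q r).Adj y x ∧ fB p q r k y + 1 = fB p q r k x := by
  intro x hx
  cases x with
  | u =>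
      refine ⟨.b ⟨0, by omega⟩, theta_adj (by simp) (Or.inr (by simp [thetaRel])), ?_⟩
      simp only [fB, Nat.dist]; omega
  | v =>
      refine ⟨.b ⟨q-2, by omega⟩, theta_adj (by simp) (Or.inl (by simp [thetaRel])), ?_⟩
      simp only [fB, Nat.dist]; omega
  | a i =>
      have hi := i.isLt
      by_cases h0 : (i : ℕ) = 0
      · refine ⟨.u, theta_adj (by simp) (Or.inl (by simp [thetaRel, h0])), ?_⟩
        simp only [fB]; omega
      by_cases h2 : 2 * ((i : ℕ) + 1) ≤ p + 1
      · refine ⟨.a ⟨(i : ℕ) - 1, by omega⟩,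
          theta_adj (by simp [Fin.ext_iff]; omega) (Or.inl (by simp [thetaRel]; omega)), ?_⟩
        simp only [fB]; omega
      by_cases hend : (i : ℕ) = p - 2
      · refine ⟨.v, theta_adj (by simp) (Or.inr (by simp [thetaRel, hend])), ?_⟩
        simp only [fB]; omega
      · refine ⟨.a ⟨(i : ℕ) + 1, by omega⟩,
          theta_adj (by simp [Fin.ext_iff]) (Or.inr (by simp [thetaRel])), ?_⟩
        simp only [fB]; omega
  | b j =>
      have hj := j.isLt
      have hne : (j : ℕ) ≠ k - 1 := by
        intro h; exact hx (by simp [Fin.ext_iff, h])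
      by_cases hlt : (j : ℕ) + 1 < k
      · refine ⟨.b ⟨(j : ℕ) + 1, by omega⟩,
          theta_adj (by simp [Fin.ext_iff]) (Or.inr (by simp [thetaRel])), ?_⟩
        simp only [fB, Nat.dist]; omega
      · refine ⟨.b ⟨(j : ℕ) - 1, by omega⟩,
          theta_adj (by simp [Fin.ext_iff]; omega) (Or.inl (by simp [thetaRel]; omega)), ?_⟩
        simp only [fB, Nat.dist]; omega
  | c l =>
      have hl := l.isLt
      by_cases h0 : (l : ℕ) = 0
      · refine ⟨.u, theta_adj (by simp) (Or.inl (by simp [thetaRel, h0])), ?_⟩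
        simp only [fB]; omega
      by_cases h2 : (l : ℕ) + 1 ≤ m
      · refine ⟨.c ⟨(l : ℕ) - 1, by omega⟩,
          theta_adj (by simp [Fin.ext_iff]; omega) (Or.inl (by simp [thetaRel]; omega)), ?_⟩
        simp only [fB]; omega
      by_cases hend : (l : ℕ) = r - 2
      · refine ⟨.v, theta_adj (by simp) (Or.inr (by simp [thetaRel, hend])), ?_⟩
        simp only [fB]; omega
      · refine ⟨.c ⟨(l : ℕ) + 1, by omega⟩,
          theta_adj (by simp [Fin.ext_iff]) (Or.inr (by simp [thetaRel])), ?_⟩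
        simp only [fB]; omega

lemma descC (p q r k m : ℕ) (hp : 1 ≤ p) (hq : q = 2*k+1) (hk : 1 ≤ k)
    (hr : r = 2*m) (hm : 1 ≤ m) (hmc : m - 1 < r - 1) :
    ∀ x : ThetaVert p q r, x ≠ .c ⟨m-1, hmc⟩ →
      ∃ y, (thetaGraph p q r).Adj y x ∧ fC p q r m y + 1 = fC p q r m x := by
  intro x hx
  cases x with
  | u =>
      refine ⟨.c ⟨0, by omega⟩, theta_adj (by simp) (Or.inr (by simp [thetaRel])), ?_⟩
      simp only [fC, Nat.dist]; omega
  | v =>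
      refine ⟨.c ⟨r-2, by omega⟩, theta_adj (by simp) (Or.inl (by simp [thetaRel])), ?_⟩
      simp only [fC, Nat.dist]; omega
  | a i =>
      have hi := i.isLt
      by_cases h0 : (i : ℕ) = 0
      · refine ⟨.u, theta_adj (by simp) (Or.inl (by simp [thetaRel, h0])), ?_⟩
        simp only [fC]; omega
      by_cases h2 : 2 * ((i : ℕ) + 1) ≤ p
      · refine ⟨.a ⟨(i : ℕ) - 1, by omega⟩,
          theta_adj (by simp [Fin.ext_iff]; omega) (Or.inl (by simp [thetaRel]; omega)), ?_⟩
        simp only [fC]; omega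
      by_cases hend : (i : ℕ) = p - 2
      · refine ⟨.v, theta_adj (by simp) (Or.inr (by simp [thetaRel, hend])), ?_⟩
        simp only [fC]; omega
      · refine ⟨.a ⟨(i : ℕ) + 1, by omega⟩,
          theta_adj (by simp [Fin.ext_iff]) (Or.inr (by simp [thetaRel])), ?_⟩
        simp only [fC]; omega
  | b j =>
      have hj := j.isLt
      by_cases h0 : (j : ℕ) = 0
      · refine ⟨.u, theta_adj (by simp) (Or.inl (by simp [thetaRel, h0])), ?_⟩
        simp only [fC]; omega
      by_cases h2 : (j : ℕ) + 1 ≤ k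
      · refine ⟨.b ⟨(j : ℕ) - 1, by omega⟩,
          theta_adj (by simp [Fin.ext_iff]; omega) (Or.inl (by simp [thetaRel]; omega)), ?_⟩
        simp only [fC]; omega
      by_cases hend : (j : ℕ) = q - 2
      · refine ⟨.v, theta_adj (by simp) (Or.inr (by simp [thetaRel, hend])), ?_⟩
        simp only [fC]; omega
      · refine ⟨.b ⟨(j : ℕ) + 1, by omega⟩,
          theta_adj (by simp [Fin.ext_iff]) (Or.inr (by simp [thetaRel])), ?_⟩
        simp only [fC]; omega
  | c l =>
      have hl := l.isLt
      have hne : (l : ℕ) ≠ m - 1 := by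
        intro h; exact hx (by simp [Fin.ext_iff, h])
      by_cases hlt : (l : ℕ) + 1 < m
      · refine ⟨.c ⟨(l : ℕ) + 1, by omega⟩,
          theta_adj (by simp [Fin.ext_iff]) (Or.inr (by simp [thetaRel])), ?_⟩
        simp only [fC, Nat.dist]; omega
      · refine ⟨.c ⟨(l : ℕ) - 1, by omega⟩,
          theta_adj (by simp [Fin.ext_iff]; omega) (Or.inl (by simp [thetaRel]; omega)), ?_⟩
        simp only [fC, Nat.dist]; omega

/-- in `Θ_{p,q,r}` (positive path lengths, at most one equal to 1,
no ordering assumed) with `q ≥ 3` odd and `r` even, the set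
`{v_{(q-1)/2}, w_{r/2}}` is a vertex metric generator. -/
theorem isVertexGenerator_case_i (p q r : ℕ)
    (hp : 1 ≤ p) (hq : 1 ≤ q) (hr : 1 ≤ r)
    (hone : ¬(p = 1 ∧ q = 1) ∧ ¬(p = 1 ∧ r = 1) ∧ ¬(q = 1 ∧ r = 1))
    (hq3 : 3 ≤ q) (hqodd : Odd q) (hreven : Even r) :
    IsVertexMetricGenerator (thetaGraph p q r)
      {vV p q r ((q - 1) / 2), wV p q r (r / 2)} := by
  obtain ⟨k, hqk⟩ := hqodd
  obtain ⟨m, hrm⟩ := hreven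
  have hqk : q = 2 * k + 1 := by omega
  have hrm : r = 2 * m := by omega
  have hk1 : 1 ≤ k := by omega
  have hm1 : 1 ≤ m := by omega
  have hkb : k - 1 < q - 1 := by omega
  have hmc : m - 1 < r - 1 := by omega
  have hsv : vV p q r ((q - 1) / 2) = ThetaVert.b ⟨k - 1, hkb⟩ := by
    have h2 : (q - 1) / 2 = k := by omega
    rw [h2]
    unfold vV
    rw [dif_pos (by omega : 0 < k ∧ k < q)]
  have hsw : wV p q r (r / 2) = ThetaVert.c ⟨m - 1, hmc⟩ := by
    have h2 : r / 2 = m := by omega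
    rw [h2]
    unfold wV
    rw [dif_pos (by omega : 0 < m ∧ m < r)]
  have hlipB : ∀ x y : ThetaVert p q r, (thetaGraph p q r).Adj x y →
      fB p q r k x ≤ fB p q r k y + 1 := by
    intro x y h
    rw [thetaGraph, SimpleGraph.fromRel_adj] at h
    rcases h.2 with h' | h'
    · exact (lipB p q r k hp hqk hk1 x y h').1
    · exact (lipB p q r k hp hqk hk1 y x h').2
  have hlipC : ∀ x y : ThetaVert p q r, (thetaGraph p q r).Adj x y →
      fC p q r m x ≤ fC p q r m y + 1 := by
    intro x y h
    rw [thetaGraph, SimpleGraph.fromRel_adj] at h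
    rcases h.2 with h' | h'
    · exact (lipC p q r m hp hq hrm hm1 x y h').1
    · exact (lipC p q r m hp hq hrm hm1 y x h').2
  have hdB : ∀ x, (thetaGraph p q r).dist (ThetaVert.b ⟨k - 1, hkb⟩) x = fB p q r k x :=
    dist_eq_of _ _ _ (by simp only [fB, Nat.dist]; omega) hlipB
      (descB p q r k m hp hqk hk1 hrm hm1 hkb)
  have hdC : ∀ x, (thetaGraph p q r).dist (ThetaVert.c ⟨m - 1, hmc⟩) x = fC p q r m x :=
    dist_eq_of _ _ _ (by simp only [fC, Nat.dist]; omega) hlipC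
      (descC p q r k m hp hqk hk1 hrm hm1 hmc)
  intro x x' hxx
  by_cases hB : fB p q r k x = fB p q r k x'
  · refine ⟨wV p q r (r / 2), by simp, ?_⟩
    rw [hsw, hdC, hdC]
    intro hC
    exact hxx (injBC p q r k m hp hqk hk1 hrm hm1 x x' hB hC)
  · refine ⟨vV p q r ((q - 1) / 2), by simp, ?_⟩
    rw [hsv, hdB, hdB]
    exact hB
end

section
/- Let G = Θ_{p,q,r} with p ≤ q ≤ r, where p = 1 and both q and r are even. Then the set S = {u, w_{r/2}} is a vertex metric generator of G. -/

lemma dist_eq_of_levels {V : Type*} (G : SimpleGraph V) (s : V) (f : V → ℕ)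
    (hzero : ∀ x, f x = 0 → x = s)
    (hstep : ∀ x, f x ≠ 0 → ∃ y, G.Adj x y ∧ f y + 1 = f x)
    (hadj : ∀ x y, G.Adj x y → f x ≤ f y + 1) (x : V) :
    G.dist s x = f x := by
  have hs : f s = 0 := by
    have key : ∀ n (x : V), f x = n → f s = 0 := by
      intro n
      induction n with
      | zero => intro x hx; rw [← hzero x hx]; exact hx
      | succ n ih =>
          intro x hx
          obtain ⟨y, _, hy⟩ := hstep x (by omega)
          exact ih y (by omega)
    exact key (f x) x rfl
  have walkex : ∀ n (x : V), f x = n → ∃ w : G.Walk x s, w.length = n := by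
    intro n
    induction n with
    | zero => intro x hx; obtain rfl := hzero x hx; exact ⟨SimpleGraph.Walk.nil, rfl⟩
    | succ n ih =>
        intro x hx
        obtain ⟨y, hxy, hy⟩ := hstep x (by omega)
        obtain ⟨w, hw⟩ := ih y (by omega)
        exact ⟨SimpleGraph.Walk.cons hxy w, by simp [hw]⟩
  obtain ⟨w, hw⟩ := walkex (f x) x rfl
  have h1 : G.dist s x ≤ f x := by
    have := SimpleGraph.dist_le w.reverse
    simpa [hw] using this
  have hreach : G.Reachable s x := ⟨w.reverse⟩
  obtain ⟨p, hp⟩ := hreach.exists_walk_length_eq_dist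
  have mono : ∀ {a b : V} (p : G.Walk a b), f b ≤ f a + p.length := by
    intro a b p
    induction p with
    | nil => simp
    | @cons a c b h p ih =>
        have := hadj c a h.symm
        have := ih
        simp only [SimpleGraph.Walk.length_cons]
        omega
  have h2 : f x ≤ G.dist s x := by
    have := mono p
    omega
  omega

def duF (q r : ℕ) : ThetaVert 1 q r → ℕ
  | .u => 0
  | .v => 1
  | .a i => Fin.elim0 i
  | .b i => min ((i : ℕ) + 1) (q - (i : ℕ))
  | .c i => min ((i : ℕ) + 1) (r - (i : ℕ))

def dwF (q r : ℕ) : ThetaVert 1 q r → ℕ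
  | .u => r / 2
  | .v => r / 2
  | .a i => Fin.elim0 i
  | .b i => r / 2 + min ((i : ℕ) + 1) (q - 1 - (i : ℕ))
  | .c i => max (r / 2 - ((i : ℕ) + 1)) (((i : ℕ) + 1) - r / 2)

lemma theta_adj_iff {q r : ℕ} (x y : ThetaVert 1 q r) :
    (thetaGraph 1 q r).Adj x y ↔ x ≠ y ∧ (thetaRel 1 q r x y ∨ thetaRel 1 q r y x) :=
  SimpleGraph.fromRel_adj _ x y

lemma test_rel_unfold (q r : ℕ) (i j : Fin (q-1)) (h : thetaRel 1 q r (.b i) (.b j)) : (j:ℕ) = (i:ℕ)+1 := h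

lemma du_zero (q r : ℕ) (hq2 : 2 ≤ q) (hqr : q ≤ r) :
    ∀ x : ThetaVert 1 q r, duF q r x = 0 → x = ThetaVert.u := by
  intro x hx
  cases x with
  | u => rfl
  | v => simp [duF] at hx
  | a i => exact Fin.elim0 i
  | b i => have := i.isLt; simp only [duF] at hx; omega
  | c i => have := i.isLt; simp only [duF] at hx; omega

lemma du_step (q r : ℕ) (hq2 : 2 ≤ q) (hqr : q ≤ r) :
    ∀ x : ThetaVert 1 q r, duF q r x ≠ 0 →
      ∃ y, (thetaGraph 1 q r).Adj x y ∧ duF q r y + 1 = duF q r x := by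
  intro x hx
  cases x with
  | u => simp [duF] at hx
  | a i => exact Fin.elim0 i
  | v =>
      refine ⟨.u, ?_, by simp [duF]⟩
      rw [theta_adj_iff]
      exact ⟨by simp, Or.inr (Or.inl rfl)⟩
  | b i =>
      have hi := i.isLt
      by_cases h1 : (i : ℕ) + 1 ≤ q - (i : ℕ) - 1
      · rcases Nat.eq_zero_or_pos (i : ℕ) with h0 | h0
        · refine ⟨.u, ?_, ?_⟩
          · rw [theta_adj_iff]
            exact ⟨by simp, Or.inr h0⟩
          · simp only [duF]; omega
        · refine ⟨.b ⟨(i : ℕ) - 1, by omega⟩, ?_, ?_⟩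
          · rw [theta_adj_iff]
            refine ⟨?_, Or.inr ?_⟩
            · simp [Fin.ext_iff]; omega
            · show (i : ℕ) = (i : ℕ) - 1 + 1; omega
          · simp only [duF]; omega
      · by_cases h2 : (i : ℕ) = q - 2
        · refine ⟨.v, ?_, ?_⟩
          · rw [theta_adj_iff]; exact ⟨by simp, Or.inl h2⟩
          · simp only [duF]; omega
        · refine ⟨.b ⟨(i : ℕ) + 1, by omega⟩, ?_, ?_⟩
          · rw [theta_adj_iff]
            refine ⟨?_, Or.inl rfl⟩
            simp [Fin.ext_iff]
          · simp only [duF]; omega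
  | c i =>
      have hi := i.isLt
      by_cases h1 : (i : ℕ) + 1 ≤ r - (i : ℕ) - 1
      · rcases Nat.eq_zero_or_pos (i : ℕ) with h0 | h0
        · refine ⟨.u, ?_, ?_⟩
          · rw [theta_adj_iff]
            exact ⟨by simp, Or.inr h0⟩
          · simp only [duF]; omega
        · refine ⟨.c ⟨(i : ℕ) - 1, by omega⟩, ?_, ?_⟩
          · rw [theta_adj_iff]
            refine ⟨?_, Or.inr ?_⟩
            · simp [Fin.ext_iff]; omega
            · show (i : ℕ) = (i : ℕ) - 1 + 1; omega
          · simp only [duF]; omega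
      · by_cases h2 : (i : ℕ) = r - 2
        · refine ⟨.v, ?_, ?_⟩
          · rw [theta_adj_iff]; exact ⟨by simp, Or.inl h2⟩
          · simp only [duF]; omega
        · refine ⟨.c ⟨(i : ℕ) + 1, by omega⟩, ?_, ?_⟩
          · rw [theta_adj_iff]
            refine ⟨?_, Or.inl rfl⟩
            simp [Fin.ext_iff]
          · simp only [duF]; omega

lemma du_rel (q r : ℕ) (hq2 : 2 ≤ q) (hqr : q ≤ r)
    (x y : ThetaVert 1 q r) (h : thetaRel 1 q r x y) :
    duF q r x ≤ duF q r y + 1 ∧ duF q r y ≤ duF q r x + 1 := by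
  cases x with
  | a i => exact Fin.elim0 i
  | u =>
    cases y with
    | u => exact h.elim
    | v => simp [duF]
    | a j => exact Fin.elim0 j
    | b j => have h' : (j : ℕ) = 0 := h; have := j.isLt; simp only [duF]; omega
    | c j => have h' : (j : ℕ) = 0 := h; have := j.isLt; simp only [duF]; omega
  | v =>
    cases y with
    | u => exact h.elim
    | v => exact h.elim
    | a j => exact Fin.elim0 j
    | b j => exact h.elim
    | c j => exact h.elim
  | b i =>
    cases y with
    | u => exact h.elim
    | v =>
        have := i.isLt
        have h' : (i : ℕ) = q - 2 := h
        simp only [duF]; omega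
    | a j => exact Fin.elim0 j
    | b j =>
        have := i.isLt; have := j.isLt
        have h' : (j : ℕ) = (i : ℕ) + 1 := h
        simp only [duF]; omega
    | c j => exact h.elim
  | c i =>
    cases y with
    | u => exact h.elim
    | v =>
        have := i.isLt
        have h' : (i : ℕ) = r - 2 := h
        simp only [duF]; omega
    | a j => exact Fin.elim0 j
    | b j => exact h.elim
    | c j =>
        have := i.isLt; have := j.isLt
        have h' : (j : ℕ) = (i : ℕ) + 1 := h
        simp only [duF]; omega

lemma dist_u (q r : ℕ) (hq2 : 2 ≤ q) (hqr : q ≤ r) (x : ThetaVert 1 q r) :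
    (thetaGraph 1 q r).dist ThetaVert.u x = duF q r x := by
  apply dist_eq_of_levels _ _ _ (du_zero q r hq2 hqr) (du_step q r hq2 hqr)
  intro x y hxy
  rw [theta_adj_iff] at hxy
  rcases hxy.2 with h | h
  · exact (du_rel q r hq2 hqr x y h).1
  · exact (du_rel q r hq2 hqr y x h).2

lemma dw_zero (q r : ℕ) (hq2 : 2 ≤ q) (hqr : q ≤ r) (hre : r % 2 = 0) :
    ∀ x : ThetaVert 1 q r, dwF q r x = 0 →
      x = ThetaVert.c ⟨r / 2 - 1, by omega⟩ := by
  intro x hx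
  cases x with
  | u => simp only [dwF] at hx; omega
  | v => simp only [dwF] at hx; omega
  | a i => exact Fin.elim0 i
  | b i => have := i.isLt; simp only [dwF] at hx; omega
  | c i =>
      have := i.isLt
      simp only [dwF] at hx
      exact congrArg _ (Fin.ext (by simp; omega))

lemma dw_step (q r : ℕ) (hq2 : 2 ≤ q) (hqr : q ≤ r) (hre : r % 2 = 0) :
    ∀ x : ThetaVert 1 q r, dwF q r x ≠ 0 →
      ∃ y, (thetaGraph 1 q r).Adj x y ∧ dwF q r y + 1 = dwF q r x := by
  intro x hx
  cases x with
  | a i => exact Fin.elim0 i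
  | u =>
      refine ⟨.c ⟨0, by omega⟩, ?_, ?_⟩
      · rw [theta_adj_iff]
        exact ⟨by simp, Or.inl rfl⟩
      · simp only [dwF]; omega
  | v =>
      refine ⟨.c ⟨r - 2, by omega⟩, ?_, ?_⟩
      · rw [theta_adj_iff]
        refine ⟨by simp, Or.inr ?_⟩
        show (r : ℕ) - 2 = r - 2; rfl
      · simp only [dwF]; omega
  | b i =>
      have hi := i.isLt
      by_cases h1 : (i : ℕ) + 1 ≤ q - 1 - (i : ℕ)
      · rcases Nat.eq_zero_or_pos (i : ℕ) with h0 | h0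
        · refine ⟨.u, ?_, ?_⟩
          · rw [theta_adj_iff]
            exact ⟨by simp, Or.inr h0⟩
          · simp only [dwF]; omega
        · refine ⟨.b ⟨(i : ℕ) - 1, by omega⟩, ?_, ?_⟩
          · rw [theta_adj_iff]
            refine ⟨?_, Or.inr ?_⟩
            · simp [Fin.ext_iff]; omega
            · show (i : ℕ) = (i : ℕ) - 1 + 1; omega
          · simp only [dwF]; omega
      · by_cases h2 : (i : ℕ) = q - 2
        · refine ⟨.v, ?_, ?_⟩
          · rw [theta_adj_iff]; exact ⟨by simp, Or.inl h2⟩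
          · simp only [dwF]; omega
        · refine ⟨.b ⟨(i : ℕ) + 1, by omega⟩, ?_, ?_⟩
          · rw [theta_adj_iff]
            refine ⟨?_, Or.inl rfl⟩
            simp [Fin.ext_iff]
          · simp only [dwF]; omega
  | c i =>
      have hi := i.isLt
      have hne : (i : ℕ) + 1 ≠ r / 2 := by
        intro hc
        simp only [dwF] at hx
        omega
      by_cases h1 : (i : ℕ) + 1 < r / 2
      · refine ⟨.c ⟨(i : ℕ) + 1, by omega⟩, ?_, ?_⟩
        · rw [theta_adj_iff]
          refine ⟨?_, Or.inl rfl⟩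
          simp [Fin.ext_iff]
        · simp only [dwF]; omega
      · refine ⟨.c ⟨(i : ℕ) - 1, by omega⟩, ?_, ?_⟩
        · rw [theta_adj_iff]
          refine ⟨?_, Or.inr ?_⟩
          · simp [Fin.ext_iff]; omega
          · show (i : ℕ) = (i : ℕ) - 1 + 1; omega
        · simp only [dwF]; omega

lemma dw_rel (q r : ℕ) (hq2 : 2 ≤ q) (hqr : q ≤ r) (hre : r % 2 = 0)
    (x y : ThetaVert 1 q r) (h : thetaRel 1 q r x y) :
    dwF q r x ≤ dwF q r y + 1 ∧ dwF q r y ≤ dwF q r x + 1 := by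
  cases x with
  | a i => exact Fin.elim0 i
  | u =>
    cases y with
    | u => exact h.elim
    | v => simp [dwF]
    | a j => exact Fin.elim0 j
    | b j => have h' : (j : ℕ) = 0 := h; have := j.isLt; simp only [dwF]; omega
    | c j => have h' : (j : ℕ) = 0 := h; have := j.isLt; simp only [dwF]; omega
  | v =>
    cases y with
    | u => exact h.elim
    | v => exact h.elim
    | a j => exact Fin.elim0 j
    | b j => exact h.elim
    | c j => exact h.elim
  | b i =>
    cases y with
    | u => exact h.elim
    | v =>
        have := i.isLt
        have h' : (i : ℕ) = q - 2 := h
        simp only [dwF]; omega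
    | a j => exact Fin.elim0 j
    | b j =>
        have := i.isLt; have := j.isLt
        have h' : (j : ℕ) = (i : ℕ) + 1 := h
        simp only [dwF]; omega
    | c j => exact h.elim
  | c i =>
    cases y with
    | u => exact h.elim
    | v =>
        have := i.isLt
        have h' : (i : ℕ) = r - 2 := h
        simp only [dwF]; omega
    | a j => exact Fin.elim0 j
    | b j => exact h.elim
    | c j =>
        have := i.isLt; have := j.isLt
        have h' : (j : ℕ) = (i : ℕ) + 1 := h
        simp only [dwF]; omega

lemma dist_w (q r : ℕ) (hq2 : 2 ≤ q) (hqr : q ≤ r) (hre : r % 2 = 0)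
    (x : ThetaVert 1 q r) :
    (thetaGraph 1 q r).dist (ThetaVert.c ⟨r / 2 - 1, by omega⟩) x = dwF q r x := by
  apply dist_eq_of_levels _ _ _ (dw_zero q r hq2 hqr hre) (dw_step q r hq2 hqr hre)
  intro x y hxy
  rw [theta_adj_iff] at hxy
  rcases hxy.2 with h | h
  · exact (dw_rel q r hq2 hqr hre x y h).1
  · exact (dw_rel q r hq2 hqr hre y x h).2

lemma key_inj (q r : ℕ) (hq2 : 2 ≤ q) (hqr : q ≤ r) (hqe : q % 2 = 0) (hre : r % 2 = 0)
    (x x' : ThetaVert 1 q r) (hne : x ≠ x')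
    (hdu : duF q r x = duF q r x') : dwF q r x ≠ dwF q r x' := by
  cases x with
  | a i => exact Fin.elim0 i
  | u =>
    cases x' with
    | u => exact absurd rfl hne
    | v => simp only [duF] at hdu; omega
    | a j => exact Fin.elim0 j
    | b j => have := j.isLt; simp only [duF] at hdu; omega
    | c j => have := j.isLt; simp only [duF] at hdu; omega
  | v =>
    cases x' with
    | u => simp only [duF] at hdu; omega
    | v => exact absurd rfl hne
    | a j => exact Fin.elim0 j
    | b j => have := j.isLt; simp only [duF, dwF]; omega
    | c j => have := j.isLt; simp only [duF, dwF]; omega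
  | b i =>
    cases x' with
    | u => have := i.isLt; simp only [duF] at hdu; omega
    | v => have := i.isLt; simp only [duF, dwF]; omega
    | a j => exact Fin.elim0 j
    | b j =>
        have := i.isLt; have := j.isLt
        have hij : (i : ℕ) ≠ (j : ℕ) := by
          intro hc; exact hne (congrArg _ (Fin.ext hc))
        simp only [duF] at hdu; simp only [dwF]; omega
    | c j =>
        have := i.isLt; have := j.isLt
        simp only [dwF]; omega
  | c i =>
    cases x' with
    | u => have := i.isLt; simp only [duF] at hdu; omega
    | v => have := i.isLt; simp only [duF, dwF]; omega
    | a j => exact Fin.elim0 j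
    | b j =>
        have := i.isLt; have := j.isLt
        simp only [dwF]; omega
    | c j =>
        have := i.isLt; have := j.isLt
        have hij : (i : ℕ) ≠ (j : ℕ) := by
          intro hc; exact hne (congrArg _ (Fin.ext hc))
        simp only [duF] at hdu; simp only [dwF]; omega

lemma wV_half (q r : ℕ) (hq2 : 2 ≤ q) (hqr : q ≤ r) :
    wV 1 q r (r / 2) = ThetaVert.c ⟨r / 2 - 1, by omega⟩ := by
  unfold wV
  rw [dif_pos ⟨by omega, by omega⟩]

/-- in `Θ_{1,q,r}` with `1 ≤ q ≤ r`, `q ≥ 2`, and both `q` and `r`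
even, the set `{u, w_{r/2}}` is a vertex metric generator. -/
theorem isVertexGenerator_case_ii (q r : ℕ)
    (hq2 : 2 ≤ q) (hqr : q ≤ r) (hqeven : Even q) (hreven : Even r) :
    IsVertexMetricGenerator (thetaGraph 1 q r)
      {ThetaVert.u, wV 1 q r (r / 2)} := by
  have hqe : q % 2 = 0 := Nat.even_iff.mp hqeven
  have hre : r % 2 = 0 := Nat.even_iff.mp hreven
  intro x x' hne
  by_cases h : duF q r x = duF q r x'
  · refine ⟨wV 1 q r (r / 2), by simp, ?_⟩
    rw [wV_half q r hq2 hqr, dist_w q r hq2 hqr hre x, dist_w q r hq2 hqr hre x']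
    exact key_inj q r hq2 hqr hqe hre x x' hne h
  · refine ⟨ThetaVert.u, by simp, ?_⟩
    rw [dist_u q r hq2 hqr x, dist_u q r hq2 hqr x']
    exact h
end

section
/- Let G = Θ_{p,q,r} with p ≤ q ≤ r, where p, q and r are all odd and q ∉ {p, p+2}. Then the set S = {v₁, w_{(r−1)/2}} is a vertex metric generator of G. -/
section Aux

set_option maxHeartbeats 1600000

/-- Generic lemma: a "potential function" that is 0 exactly at `s`, 1-Lipschitz along
edges, and has a descending neighbor at every nonzero point, equals the distance from `s`. -/
lemma dist_eq_of_potential {V : Type*} (G : SimpleGraph V) (s : V) (f : V → ℕ)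
    (h0 : ∀ x, f x = 0 ↔ x = s)
    (hLip : ∀ x y, G.Adj x y → f y ≤ f x + 1)
    (hDesc : ∀ x, f x ≠ 0 → ∃ y, G.Adj y x ∧ f y + 1 = f x)
    (x : V) : G.dist s x = f x := by
  have exw : ∀ n, ∀ z : V, f z = n → ∃ W : G.Walk s z, W.length = n := by
    intro n
    induction n with
    | zero => intro z hz; obtain rfl := (h0 z).1 hz; exact ⟨.nil, rfl⟩
    | succ n ih =>
      intro z hz
      obtain ⟨y, hadj, hy⟩ := hDesc z (by omega)
      obtain ⟨W, hW⟩ := ih y (by omega)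
      exact ⟨W.concat hadj, by rw [SimpleGraph.Walk.length_concat, hW]⟩
  have low : ∀ {a b : V} (W : G.Walk a b), f b ≤ f a + W.length := by
    intro a b W
    induction W with
    | nil => simp
    | @cons a c b h W ih =>
      have := hLip a c h
      rw [SimpleGraph.Walk.length_cons]
      omega
  obtain ⟨W, hW⟩ := exw (f x) x rfl
  have hub : G.dist s x ≤ f x := hW ▸ SimpleGraph.dist_le W
  have hreach : G.Reachable s x := ⟨W⟩
  obtain ⟨P, hP⟩ := hreach.exists_walk_length_eq_dist
  have hlow := low P
  have hs : f s = 0 := (h0 s).2 rfl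
  omega

/-- Distance from the vertex `v₁` in the Θ-graph. -/
def f1 (p q r : ℕ) : ThetaVert p q r → ℕ
  | .u => 1
  | .v => p + 1
  | .a i => (i : ℕ) + 2
  | .b j => min (j : ℕ) (p + q - (j : ℕ))
  | .c k => min ((k : ℕ) + 2) (p + r - (k : ℕ))

/-- Distance from the vertex `w_m` in the Θ-graph (with `r = 2m+1`). -/
def f2 (p q r m : ℕ) : ThetaVert p q r → ℕ
  | .u => m
  | .v => m + 1
  | .a i => min (m + (i : ℕ) + 1) (m + p - (i : ℕ))
  | .b j => min (m + (j : ℕ) + 1) (m + q - (j : ℕ))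
  | .c k => max ((k : ℕ) + 1) m - min ((k : ℕ) + 1) m

lemma dist_f1 (p q r : ℕ) (hp : 1 ≤ p) (hq : p + 4 ≤ q) (hr : q ≤ r) (h0q : 0 < q - 1)
    (x : ThetaVert p q r) :
    (thetaGraph p q r).dist (ThetaVert.b ⟨0, h0q⟩) x = f1 p q r x := by
  apply dist_eq_of_potential
  · -- h0
    intro z
    rcases z with _ | _ | i | i | i <;> (try obtain ⟨i, hi⟩ := i) <;> simp [f1] <;> omega
  · -- Lipschitz
    intro x y hadj
    rw [thetaGraph, SimpleGraph.fromRel_adj] at hadj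
    obtain ⟨hne, h⟩ := hadj
    rcases x with _ | _ | i | i | i <;> rcases y with _ | _ | j | j | j <;>
      (try obtain ⟨i, hi⟩ := i) <;> (try obtain ⟨j, hj⟩ := j) <;>
      simp [thetaRel, f1] at h ⊢ <;> omega
  · -- descent
    intro z hz
    rcases z with _ | _ | i | i | i
    · exact ⟨.b ⟨0, h0q⟩, theta_adj (by simp) (by right; simp [thetaRel]), by simp [f1]⟩
    · by_cases hp1 : p = 1
      · exact ⟨.u, theta_adj (by simp) (by left; simp [thetaRel]; omega),
          by simp [f1]; omega⟩
      · refine ⟨.a ⟨p - 2, by omega⟩, theta_adj (by simp)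
          (by left; simp [thetaRel]), by simp [f1]; omega⟩
    · obtain ⟨i, hi⟩ := i
      rcases Nat.eq_zero_or_pos i with h0 | h0
      · subst h0
        exact ⟨.u, theta_adj (by simp) (by left; simp [thetaRel]), by simp [f1]⟩
      · refine ⟨.a ⟨i - 1, by omega⟩, theta_adj (by simp; omega)
          (by left; simp [thetaRel]; omega), by simp [f1]; omega⟩
    · obtain ⟨i, hi⟩ := i
      simp only [f1] at hz
      by_cases hc : 2 * i ≤ p + q
      · refine ⟨.b ⟨i - 1, by omega⟩, theta_adj (by simp; omega)
          (by left; simp [thetaRel]; omega), by simp [f1]; omega⟩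
      · by_cases hlast : i = q - 2
        · refine ⟨.v, theta_adj (by simp) (by right; simp [thetaRel]; omega),
            by simp [f1]; omega⟩
        · refine ⟨.b ⟨i + 1, by omega⟩, theta_adj (by simp)
            (by right; simp [thetaRel]), by simp [f1]; omega⟩
    · obtain ⟨i, hi⟩ := i
      by_cases hc : i + 2 ≤ p + r - i
      · rcases Nat.eq_zero_or_pos i with h0 | h0
        · subst h0
          exact ⟨.u, theta_adj (by simp) (by left; simp [thetaRel]), by simp [f1]; omega⟩
        · refine ⟨.c ⟨i - 1, by omega⟩, theta_adj (by simp; omega)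
            (by left; simp [thetaRel]; omega), by simp [f1]; omega⟩
      · by_cases hlast : i = r - 2
        · refine ⟨.v, theta_adj (by simp) (by right; simp [thetaRel]; omega),
            by simp [f1]; omega⟩
        · refine ⟨.c ⟨i + 1, by omega⟩, theta_adj (by simp)
            (by right; simp [thetaRel]), by simp [f1]; omega⟩

lemma dist_f2 (p q r m : ℕ) (hp : 1 ≤ p) (hq : p + 4 ≤ q) (hr : q ≤ r) (hm : r = 2 * m + 1)
    (hmr : m - 1 < r - 1) (x : ThetaVert p q r) :
    (thetaGraph p q r).dist (ThetaVert.c ⟨m - 1, hmr⟩) x = f2 p q r m x := by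
  have hm2 : 2 ≤ m := by omega
  apply dist_eq_of_potential
  · intro z
    rcases z with _ | _ | i | i | i <;> (try obtain ⟨i, hi⟩ := i) <;> simp [f2] <;> omega
  · intro x y hadj
    rw [thetaGraph, SimpleGraph.fromRel_adj] at hadj
    obtain ⟨hne, h⟩ := hadj
    rcases x with _ | _ | i | i | i <;> rcases y with _ | _ | j | j | j <;>
      (try obtain ⟨i, hi⟩ := i) <;> (try obtain ⟨j, hj⟩ := j) <;>
      simp [thetaRel, f2] at h ⊢ <;> omega
  · intro z hz
    rcases z with _ | _ | i | i | i
    · exact ⟨.c ⟨0, by omega⟩, theta_adj (by simp) (by right; simp [thetaRel]),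
        by simp [f2]; omega⟩
    · refine ⟨.c ⟨r - 2, by omega⟩, theta_adj (by simp)
        (by left; simp [thetaRel]), by simp [f2]; omega⟩
    · obtain ⟨i, hi⟩ := i
      by_cases hc : 2 * i + 1 ≤ p
      · rcases Nat.eq_zero_or_pos i with h0 | h0
        · subst h0
          exact ⟨.u, theta_adj (by simp) (by left; simp [thetaRel]), by simp [f2]; omega⟩
        · refine ⟨.a ⟨i - 1, by omega⟩, theta_adj (by simp; omega)
            (by left; simp [thetaRel]; omega), by simp [f2]; omega⟩
      · by_cases hlast : i = p - 2
        · refine ⟨.v, theta_adj (by simp) (by right; simp [thetaRel]; omega),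
            by simp [f2]; omega⟩
        · refine ⟨.a ⟨i + 1, by omega⟩, theta_adj (by simp)
            (by right; simp [thetaRel]), by simp [f2]; omega⟩
    · obtain ⟨i, hi⟩ := i
      by_cases hc : 2 * i + 1 ≤ q
      · rcases Nat.eq_zero_or_pos i with h0 | h0
        · subst h0
          exact ⟨.u, theta_adj (by simp) (by left; simp [thetaRel]), by simp [f2]; omega⟩
        · refine ⟨.b ⟨i - 1, by omega⟩, theta_adj (by simp; omega)
            (by left; simp [thetaRel]; omega), by simp [f2]; omega⟩
      · by_cases hlast : i = q - 2
        · refine ⟨.v, theta_adj (by simp) (by right; simp [thetaRel]; omega),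
            by simp [f2]; omega⟩
        · refine ⟨.b ⟨i + 1, by omega⟩, theta_adj (by simp)
            (by right; simp [thetaRel]), by simp [f2]; omega⟩
    · obtain ⟨i, hi⟩ := i
      simp only [f2] at hz
      by_cases hc : i + 1 < m
      · refine ⟨.c ⟨i + 1, by omega⟩, theta_adj (by simp)
          (by right; simp [thetaRel]), by simp [f2]; omega⟩
      · refine ⟨.c ⟨i - 1, by omega⟩, theta_adj (by simp; omega)
          (by left; simp [thetaRel]; omega), by simp [f2]; omega⟩

end Aux

set_option maxHeartbeats 4000000 in
/-- in `Θ_{p,q,r}` with `1 ≤ p ≤ q ≤ r`, `q ≥ 2`, all of `p`, `q`,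
`r` odd and `q ∉ {p, p+2}`, the set `{v₁, w_{(r-1)/2}}` is a vertex metric
generator. -/
theorem isVertexGenerator_case_vi (p q r : ℕ)
    (hp : 1 ≤ p) (hpq : p ≤ q) (hqr : q ≤ r) (hq2 : 2 ≤ q)
    (hpo : Odd p) (hqo : Odd q) (hro : Odd r)
    (hq : q ≠ p ∧ q ≠ p + 2) :
    IsVertexMetricGenerator (thetaGraph p q r)
      {vV p q r 1, wV p q r ((r - 1) / 2)} := by
  obtain ⟨hq1, hq3⟩ := hq
  obtain ⟨A, hA⟩ := hpo
  obtain ⟨B, hB⟩ := hqo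
  obtain ⟨C, hC⟩ := hro
  have hq4 : p + 4 ≤ q := by omega
  have h0q : 0 < q - 1 := by omega
  set m := (r - 1) / 2 with hmdef
  have hm : r = 2 * m + 1 := by omega
  have hmr : m - 1 < r - 1 := by omega
  have hs1 : vV p q r 1 = ThetaVert.b ⟨0, h0q⟩ := by
    rw [vV, dif_pos (by omega : 0 < 1 ∧ 1 < q)]
  have hs2 : wV p q r m = ThetaVert.c ⟨m - 1, hmr⟩ := by
    rw [wV, dif_pos (by omega : 0 < m ∧ m < r)]
  intro x x' hne
  by_cases h1 : f1 p q r x = f1 p q r x'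
  · refine ⟨wV p q r m, by simp, ?_⟩
    rw [hs2, dist_f2 p q r m hp hq4 hqr hm hmr, dist_f2 p q r m hp hq4 hqr hm hmr]
    rcases x with _ | _ | i | i | i <;> rcases x' with _ | _ | j | j | j <;>
      (try obtain ⟨i, hi⟩ := i) <;> (try obtain ⟨j, hj⟩ := j) <;>
      simp [f1, f2] at h1 hne ⊢ <;> omega
  · refine ⟨vV p q r 1, by simp, ?_⟩
    rw [hs1, dist_f1 p q r hp hq4 hqr h0q, dist_f1 p q r hp hq4 hqr h0q]
    exact h1
end
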